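/- arXiv:1906.08821 — 8 statements merged into one kernel-verified Lean document; each statement's English description precedes it below -/
import Mathlib

section
/- Let k be a field of prime characteristic p, let n be an integer with n > 1 that is not divisible by p, let e be a nonnegative integer, and let b be the unique integer with p^e ≡ b (mod n) and 1 ≤ b ≤ n−1. Then the dimension over k of the quotient ring k[X,Y]/(X^{p^e}, Y^{p^e}, X^n − Y^n) equals n·p^e − b·(n − b). -/
/-!
Write `q = a n + b` with `0 ≤ b < n`. Modulo `X^n - Y^n` the monomial `X^i Y^j` equals
`X^(i % n) Y^(j + n (i / n))`, so the quotient is spanned by the classes of `X^c Y^m` with `c < n`.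
Such a class vanishes once `m ≥ q`, and also once `c ≥ b` and `m ≥ a n`, because
`X^b Y^(a n) ≡ X^q`. What survives is a staircase of `b` columns of height `q` and `n - b` columns
of height `a n`. These monomials are linearly independent: the linear map sending a monomial to
its reduced exponent, if that lies in the staircase, and to `0` otherwise kills every monomial
multiple of the three generators. Hence the dimension is `b q + (n - b) a n = n q - b (n - b)`.
-/

open MvPolynomial Finset

noncomputable section

variable {k : Type*} [Field k] {n q : ℕ}

variable (k) in
def fermatIdeal (n q : ℕ) : Ideal (MvPolynomial (Fin 2) k) :=
  Ideal.span {X 0 ^ q, X 1 ^ q, X 0 ^ n - X 1 ^ n}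

lemma subset_fermatIdeal :
    {X 0 ^ q, X 1 ^ q, X 0 ^ n - X 1 ^ n} ⊆ (fermatIdeal k n q : Set (MvPolynomial (Fin 2) k)) :=
  Ideal.subset_span

def reduceExp (n i j : ℕ) : ℕ × ℕ := (i % n, j + n * (i / n))

def staircase (n q : ℕ) : Finset (ℕ × ℕ) :=
  range (q % n) ×ˢ range q ∪ Ico (q % n) n ×ˢ range (q / n * n)

lemma card_staircase : #(staircase n q) = q % n * q + (n - q % n) * (q / n * n) := by
  rw [staircase, card_union_of_disjoint, card_product, card_product]
  · simp only [card_range, Nat.card_Ico]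
  refine disjoint_product.2 (Or.inl (disjoint_left.2 fun c hc hc' => ?_))
  rw [mem_range] at hc
  rw [mem_Ico] at hc'
  omega

lemma fst_lt_of_mem_staircase (hn : 0 < n) {x : ℕ × ℕ} (h : x ∈ staircase n q) : x.1 < n := by
  simp only [staircase, mem_union, mem_product, mem_range, mem_Ico] at h
  have := Nat.mod_lt q hn
  omega

lemma reduceExp_of_lt {i : ℕ} (j : ℕ) (h : i < n) : reduceExp n i j = (i, j) := by
  simp [reduceExp, Nat.mod_eq_of_lt h, Nat.div_eq_of_lt h]

lemma reduceExp_add_self (hn : 0 < n) (i j : ℕ) :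
    reduceExp n (i + n) j = reduceExp n i (j + n) := by
  simp only [reduceExp, Nat.add_mod_right, Nat.add_div_right _ hn, Prod.mk.injEq, true_and]
  ring

lemma reduceExp_notMem_staircase_of_le {i j : ℕ} (h : q ≤ j) :
    reduceExp n i j ∉ staircase n q := by
  simp only [staircase, reduceExp, mem_union, mem_product, mem_range, mem_Ico]
  have := Nat.div_mul_le_self q n
  omega

lemma reduceExp_add_notMem_staircase (hn : 0 < n) (i j : ℕ) :
    reduceExp n (i + q) j ∉ staircase n q := by
  have hq := Nat.div_add_mod q n
  have hiq := Nat.div_add_mod (i + q) n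
  have hb := Nat.mod_lt q hn
  have hdiv : q / n ≤ (i + q) / n := Nat.div_le_div_right (by omega)
  simp only [staircase, reduceExp, mem_union, mem_product, mem_range, mem_Ico, not_or, not_and,
    not_lt]
  rcases hdiv.eq_or_lt with h | h
  · rw [← h] at hiq ⊢
    exact ⟨fun _ => by omega, fun _ => by nlinarith⟩
  · have : n * (q / n + 1) ≤ n * ((i + q) / n) := Nat.mul_le_mul_left n h
    exact ⟨fun _ => by nlinarith, fun _ => by nlinarith⟩

lemma X_pow_mul_X_pow_sub_mem_fermatIdeal (i j : ℕ) :
    (X 0 ^ i * X 1 ^ j - X 0 ^ (i % n) * X 1 ^ (j + n * (i / n)) : MvPolynomial (Fin 2) k) ∈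
      fermatIdeal k n q := by
  obtain ⟨c, hc⟩ := sub_dvd_pow_sub_pow ((X 0 : MvPolynomial (Fin 2) k) ^ n) (X 1 ^ n) (i / n)
  have : (X 0 ^ i * X 1 ^ j - X 0 ^ (i % n) * X 1 ^ (j + n * (i / n)) : MvPolynomial (Fin 2) k) =
      X 0 ^ (i % n) * X 1 ^ j * ((X 0 ^ n) ^ (i / n) - (X 1 ^ n) ^ (i / n)) := by
    nth_rewrite 1 [← Nat.mod_add_div i n]
    ring
  rw [this, hc]
  exact Ideal.mul_mem_left _ _ (Ideal.mul_mem_right _ _ (subset_fermatIdeal (by simp)))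

lemma X_pow_mul_X_pow_mem_fermatIdeal {c m : ℕ} (hc : c < n) (h : (c, m) ∉ staircase n q) :
    (X 0 ^ c * X 1 ^ m : MvPolynomial (Fin 2) k) ∈ fermatIdeal k n q := by
  simp only [staircase, mem_union, mem_product, mem_range, mem_Ico, not_or, not_and, not_lt] at h
  rcases lt_or_ge c (q % n) with hcb | hbc
  · have : (X 0 ^ c * X 1 ^ m : MvPolynomial (Fin 2) k) = X 0 ^ c * X 1 ^ (m - q) * X 1 ^ q := by
      rw [mul_assoc, ← pow_add, Nat.sub_add_cancel (h.1 hcb)]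
    rw [this]
    exact Ideal.mul_mem_left _ _ (subset_fermatIdeal (by simp))
  · have hcorner : (X 0 ^ (q % n) * X 1 ^ (q / n * n) : MvPolynomial (Fin 2) k) ∈
        fermatIdeal k n q := by
      have hX : (X 0 ^ q * X 1 ^ 0 : MvPolynomial (Fin 2) k) ∈ fermatIdeal k n q := by
        simpa using subset_fermatIdeal (by simp)
      simpa [mul_comm] using sub_mem hX (X_pow_mul_X_pow_sub_mem_fermatIdeal q 0)
    have : (X 0 ^ c * X 1 ^ m : MvPolynomial (Fin 2) k) =
        X 0 ^ (c - q % n) * X 1 ^ (m - q / n * n) * (X 0 ^ (q % n) * X 1 ^ (q / n * n)) := by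
      rw [mul_mul_mul_comm, ← pow_add, ← pow_add, Nat.sub_add_cancel hbc,
        Nat.sub_add_cancel (h.2 ⟨hbc, hc⟩)]
    rw [this]
    exact Ideal.mul_mem_left _ _ hcorner

lemma monomial_eq_X_pow_mul_X_pow (d : Fin 2 →₀ ℕ) :
    (monomial d 1 : MvPolynomial (Fin 2) k) = X 0 ^ d 0 * X 1 ^ d 1 := by
  simp [monomial_eq, Finsupp.prod_fintype, Fin.prod_univ_two]

variable (k) in
def staircaseCoeff (n q : ℕ) : MvPolynomial (Fin 2) k →ₗ[k] ℕ × ℕ →₀ k :=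
  (basisMonomials (Fin 2) k).constr k fun d =>
    if reduceExp n (d 0) (d 1) ∈ staircase n q then Finsupp.single (reduceExp n (d 0) (d 1)) 1
    else 0

lemma staircaseCoeff_X_pow_mul_X_pow (i j : ℕ) :
    staircaseCoeff k n q (X 0 ^ i * X 1 ^ j) =
      if reduceExp n i j ∈ staircase n q then Finsupp.single (reduceExp n i j) 1 else 0 := by
  have := (basisMonomials (Fin 2) k).constr_basis k (fun d =>
    if reduceExp n (d 0) (d 1) ∈ staircase n q then Finsupp.single (reduceExp n (d 0) (d 1)) (1 : k)
    else 0) (Finsupp.single 0 i + Finsupp.single 1 j)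
  rw [staircaseCoeff]
  simpa [coe_basisMonomials, monomial_eq_X_pow_mul_X_pow] using this

lemma staircaseCoeff_mul_eq_zero {g : MvPolynomial (Fin 2) k}
    (h : ∀ i j, staircaseCoeff k n q (X 0 ^ i * X 1 ^ j * g) = 0) (f : MvPolynomial (Fin 2) k) :
    staircaseCoeff k n q (f * g) = 0 := by
  have : staircaseCoeff k n q ∘ₗ LinearMap.mulRight k g = 0 :=
    (basisMonomials (Fin 2) k).ext fun d => by
      simpa [coe_basisMonomials, monomial_eq_X_pow_mul_X_pow] using h (d 0) (d 1)
  simpa using LinearMap.congr_fun this f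

lemma staircaseCoeff_eq_zero_of_mem (hn : 0 < n) {x : MvPolynomial (Fin 2) k}
    (hx : x ∈ fermatIdeal k n q) : staircaseCoeff k n q x = 0 := by
  rw [fermatIdeal, Ideal.mem_span_insert] at hx
  obtain ⟨a, y, hy, rfl⟩ := hx
  rw [Ideal.mem_span_insert] at hy
  obtain ⟨b, z, hz, rfl⟩ := hy
  obtain ⟨c, rfl⟩ := Ideal.mem_span_singleton'.1 hz
  have hXq : ∀ i j, staircaseCoeff k n q (X 0 ^ i * X 1 ^ j * X 0 ^ q) = 0 := fun i j => by
    rw [show (X 0 ^ i * X 1 ^ j * X 0 ^ q : MvPolynomial (Fin 2) k) = X 0 ^ (i + q) * X 1 ^ j by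
      ring, staircaseCoeff_X_pow_mul_X_pow, if_neg (reduceExp_add_notMem_staircase hn i j)]
  have hYq : ∀ i j, staircaseCoeff k n q (X 0 ^ i * X 1 ^ j * X 1 ^ q) = 0 := fun i j => by
    rw [mul_assoc, ← pow_add, staircaseCoeff_X_pow_mul_X_pow,
      if_neg (reduceExp_notMem_staircase_of_le (Nat.le_add_left q j))]
  have hXY : ∀ i j, staircaseCoeff k n q (X 0 ^ i * X 1 ^ j * (X 0 ^ n - X 1 ^ n)) = 0 :=
    fun i j => by
      rw [show (X 0 ^ i * X 1 ^ j * (X 0 ^ n - X 1 ^ n) : MvPolynomial (Fin 2) k) =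
          X 0 ^ (i + n) * X 1 ^ j - X 0 ^ i * X 1 ^ (j + n) by ring, map_sub,
        staircaseCoeff_X_pow_mul_X_pow, staircaseCoeff_X_pow_mul_X_pow,
        reduceExp_add_self hn, sub_self]
  rw [map_add, map_add, staircaseCoeff_mul_eq_zero hXq, staircaseCoeff_mul_eq_zero hYq,
    staircaseCoeff_mul_eq_zero hXY, add_zero, add_zero]

variable (k) in
def staircaseMonomial (n q : ℕ) : staircase n q → MvPolynomial (Fin 2) k ⧸ fermatIdeal k n q :=
  fun x => Ideal.Quotient.mk _ (X 0 ^ x.1.1 * X 1 ^ x.1.2)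

lemma linearIndependent_staircaseMonomial (hn : 0 < n) :
    LinearIndependent k (staircaseMonomial k n q) := by
  let coeff : (MvPolynomial (Fin 2) k ⧸ fermatIdeal k n q) →ₗ[k] ℕ × ℕ →₀ k :=
    ((fermatIdeal k n q).restrictScalars k).liftQ (staircaseCoeff k n q)
      (fun _ hx => LinearMap.mem_ker.2 <|
        staircaseCoeff_eq_zero_of_mem hn <| (Submodule.restrictScalars_mem k _ _).1 hx) ∘ₗ
      (Submodule.Quotient.restrictScalarsEquiv k (fermatIdeal k n q)).symm.toLinearMap
  refine LinearIndependent.of_comp coeff ?_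
  have : coeff ∘ staircaseMonomial k n q = fun x : staircase n q => Finsupp.single x.1 (1 : k) := by
    funext x
    rw [Function.comp_apply, staircaseMonomial, ← Ideal.Quotient.mk_eq_mk, LinearMap.comp_apply,
      LinearEquiv.coe_coe, Submodule.Quotient.restrictScalarsEquiv_symm_mk, Submodule.liftQ_apply,
      staircaseCoeff_X_pow_mul_X_pow, reduceExp_of_lt _ (fst_lt_of_mem_staircase hn x.2),
      if_pos x.2]
  rw [this]
  exact (Finsupp.linearIndependent_single_one k _).comp _ Subtype.val_injective

lemma mk_X_pow_mul_X_pow_mem_span_staircaseMonomial (hn : 0 < n) (i j : ℕ) :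
    Ideal.Quotient.mk (fermatIdeal k n q) (X 0 ^ i * X 1 ^ j) ∈
      Submodule.span k (Set.range (staircaseMonomial k n q)) := by
  rw [(Ideal.Quotient.mk_eq_mk_iff_sub_mem _ _).2 (X_pow_mul_X_pow_sub_mem_fermatIdeal i j)]
  by_cases h : reduceExp n i j ∈ staircase n q
  · exact Submodule.subset_span ⟨⟨_, h⟩, rfl⟩
  · rw [Ideal.Quotient.eq_zero_iff_mem.2 (X_pow_mul_X_pow_mem_fermatIdeal (Nat.mod_lt i hn) h)]
    exact zero_mem _

lemma span_staircaseMonomial (hn : 0 < n) :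
    Submodule.span k (Set.range (staircaseMonomial k n q)) = ⊤ := by
  rw [eq_top_iff]
  rintro x -
  obtain ⟨f, rfl⟩ := Ideal.Quotient.mk_surjective x
  induction f using MvPolynomial.induction_on' with
  | monomial d a =>
    rw [← mul_one a, ← smul_eq_mul, ← smul_monomial, monomial_eq_X_pow_mul_X_pow,
      ← Ideal.Quotient.mkₐ_eq_mk k, map_smul]
    exact Submodule.smul_mem _ a (mk_X_pow_mul_X_pow_mem_span_staircaseMonomial hn _ _)
  | add f g hf hg =>
    rw [map_add]
    exact add_mem hf hg

theorem finrank_quotient_fermatIdeal (hn : 0 < n) :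
    Module.finrank k (MvPolynomial (Fin 2) k ⧸ fermatIdeal k n q) =
      q % n * q + (n - q % n) * (q / n * n) := by
  rw [Module.finrank_eq_card_basis (Module.Basis.mk (linearIndependent_staircaseMonomial hn)
    (span_staircaseMonomial hn).ge), Fintype.card_coe, card_staircase]

end

theorem stmt0_general {k : Type*} [Field k] (p : ℕ)
    (n : ℕ) (hn : 1 < n) (e b : ℕ)
    (hb : p ^ e ≡ b [MOD n]) (hb2 : b ≤ n - 1) :
    (Module.finrank k (MvPolynomial (Fin 2) k ⧸
        Ideal.span {(X 0 : MvPolynomial (Fin 2) k) ^ p ^ e, X 1 ^ p ^ e,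
          X 0 ^ n - X 1 ^ n}) : ℤ) =
      (n : ℤ) * (p : ℤ) ^ e - (b : ℤ) * ((n : ℤ) - (b : ℤ)) := by
  have hbn : b < n := by omega
  have hmod : p ^ e % n = b := by rwa [Nat.ModEq, Nat.mod_eq_of_lt hbn] at hb
  have hdiv : ((p ^ e / n : ℕ) : ℤ) * n + b = (p : ℤ) ^ e := by
    rw [← hmod]
    exact_mod_cast Nat.div_add_mod' (p ^ e) n
  rw [← fermatIdeal, finrank_quotient_fermatIdeal (by omega), hmod]
  generalize p ^ e / n = a at hdiv ⊢
  push_cast [Nat.cast_sub hbn.le]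
  linear_combination ((n : ℤ) - b) * hdiv

/-- Theorem 1(1) of the paper (polynomial-ring form): for a field `k` of prime
characteristic `p`, `n > 1` not divisible by `p`, and `b` the residue of `p^e` mod `n`
with `1 ≤ b ≤ n - 1`, the `k`-dimension of `k[X,Y]/(X^{p^e}, Y^{p^e}, X^n - Y^n)` is
`n·p^e - b·(n - b)`. -/
theorem stmt0 {k : Type*} [Field k] (p : ℕ) (hp : p.Prime) [CharP k p]
    (n : ℕ) (hn : 1 < n) (hpn : ¬ p ∣ n) (e b : ℕ)
    (hb : p ^ e ≡ b [MOD n]) (hb1 : 1 ≤ b) (hb2 : b ≤ n - 1) :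
    (Module.finrank k (MvPolynomial (Fin 2) k ⧸
        Ideal.span {(X 0 : MvPolynomial (Fin 2) k) ^ p ^ e, X 1 ^ p ^ e,
          X 0 ^ n - X 1 ^ n}) : ℤ) =
      (n : ℤ) * (p : ℤ) ^ e - (b : ℤ) * ((n : ℤ) - (b : ℤ)) :=
  stmt0_general p n hn e b hb hb2
end

section
/- Let k be a field of prime characteristic p, let n be an integer with n > 1 that is not divisible by p, define φ(e) := n·p^e − dim_k (k[X,Y]/(X^{p^e}, Y^{p^e}, X^n − Y^n)) for each nonnegative integer e, and let ω be the multiplicative order of p modulo n. Then φ(e + ω) = φ(e) for every nonnegative integer e; that is, φ is immediately periodic with period dividing ω. -/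
/-!
Write `X = X 0`, `Y = X 1` and `q = n c + r` with `r < n`. Modulo `X ^ n - Y ^ n` every
monomial `X ^ a * Y ^ b` is congruent to `X ^ (a + n ⌊b / n⌋) * Y ^ (b % n)`, and
`Y ^ q ≡ X ^ (n c) * Y ^ r`.
Hence the quotient by `(X ^ q, Y ^ q, X ^ n - Y ^ n)` is spanned by the monomials of the staircase
`{b < r, a < q} ∪ {r ≤ b < n, a < n c}`; they are independent because reducing exponents this
way and discarding everything off the staircase is a linear map killing the ideal. So the
dimension is `q r + n c (n - r)`, i.e. `n q - dim = r (n - r)`. For `q = p ^ e` the residue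
`r = p ^ e % n` only depends on `e` modulo the order `ω` of `p` in `ZMod n`.
-/

open MvPolynomial

namespace HilbertKunz

section Staircase

variable (n q : ℕ)

def staircase : Finset (ℕ × ℕ) :=
  Finset.range q ×ˢ Finset.range (q % n) ∪ Finset.range (n * (q / n)) ×ˢ Finset.Ico (q % n) n

variable {n q} in
lemma mem_staircase {x : ℕ × ℕ} :
    x ∈ staircase n q ↔
      x.1 < q ∧ x.2 < q % n ∨ x.1 < n * (q / n) ∧ q % n ≤ x.2 ∧ x.2 < n := by
  simp only [staircase, Finset.mem_union, Finset.mem_product, Finset.mem_range, Finset.mem_Ico]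

lemma card_staircase : (staircase n q).card = q * (q % n) + n * (q / n) * (n - q % n) := by
  rw [staircase, Finset.card_union_of_disjoint, Finset.card_product, Finset.card_product,
    Finset.card_range, Finset.card_range, Finset.card_range, Nat.card_Ico]
  rw [Finset.disjoint_left]
  rintro x hx hx'
  simp only [Finset.mem_product, Finset.mem_range, Finset.mem_Ico] at hx hx'
  omega

def reduceExp (a b : ℕ) : ℕ × ℕ := (a + n * (b / n), b % n)

variable {n q}

lemma reduceExp_of_lt {a b : ℕ} (hb : b < n) : reduceExp n a b = (a, b) := by
  simp [reduceExp, Nat.div_eq_of_lt hb, Nat.mod_eq_of_lt hb]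

lemma reduceExp_add_snd (hn : 0 < n) (a b : ℕ) :
    reduceExp n a (b + n) = reduceExp n (a + n) b := by
  simp only [reduceExp, Nat.add_div_right _ hn, Nat.add_mod_right, Prod.mk.injEq, and_true]
  ring

lemma reduceExp_add_fst_notMem (a b : ℕ) : reduceExp n (a + q) b ∉ staircase n q := by
  have := Nat.div_add_mod q n
  simp only [reduceExp, mem_staircase]
  omega

lemma reduceExp_add_snd_notMem (hn : 0 < n) (a b : ℕ) :
    reduceExp n a (b + q) ∉ staircase n q := by
  have hq := Nat.div_add_mod q n
  have hbq := Nat.div_add_mod (b + q) n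
  have hmod := Nat.mod_lt q hn
  have hbmod := Nat.mod_lt (b + q) hn
  have hle : q / n ≤ (b + q) / n := Nat.div_le_div_right (Nat.le_add_left q b)
  have hstep : q / n < (b + q) / n → n * (q / n) + n ≤ n * ((b + q) / n) := fun h =>
    (Nat.mul_succ n _).symm ▸ Nat.mul_le_mul_left n h
  simp only [reduceExp, mem_staircase]
  rcases hle.eq_or_lt with heq | hlt
  · rw [← heq] at hbq ⊢
    omega
  · have := hstep hlt
    omega

lemma le_of_notMem_staircase {x : ℕ × ℕ} (hx : x.2 < n) (h : x ∉ staircase n q) :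
    q ≤ x.1 ∨ n * (q / n) ≤ x.1 ∧ q % n ≤ x.2 := by
  rw [mem_staircase] at h
  omega

end Staircase

section Quotient

variable (R : Type*) [CommRing R] (n q : ℕ)

noncomputable abbrev ideal : Ideal (MvPolynomial (Fin 2) R) :=
  Ideal.span {X 0 ^ q, X 1 ^ q, X 0 ^ n - X 1 ^ n}

noncomputable def normalForm : MvPolynomial (Fin 2) R →ₗ[R] (ℕ × ℕ →₀ R) :=
  (basisMonomials (Fin 2) R).constr R fun d =>
    if reduceExp n (d 0) (d 1) ∈ staircase n q then Finsupp.single (reduceExp n (d 0) (d 1)) 1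
    else 0

variable {R n q}

lemma normalForm_monomial (d : Fin 2 →₀ ℕ) (c : R) :
    normalForm R n q (monomial d c) = if reduceExp n (d 0) (d 1) ∈ staircase n q then
      Finsupp.single (reduceExp n (d 0) (d 1)) c else 0 := by
  rw [← mul_one c, ← smul_eq_mul, ← smul_monomial, map_smul,
    show monomial d (1 : R) = basisMonomials (Fin 2) R d by rw [coe_basisMonomials], normalForm,
    Module.Basis.constr_basis]
  split_ifs <;> simp

lemma normalForm_X_pow_mul_X_pow (a b : ℕ) :
    normalForm R n q (X 0 ^ a * X 1 ^ b) =
      if reduceExp n a b ∈ staircase n q then Finsupp.single (reduceExp n a b) 1 else 0 := by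
  rw [X_pow_eq_monomial, X_pow_eq_monomial, monomial_mul, mul_one, normalForm_monomial]
  simp

lemma normalForm_mul_eq_zero_of_monomial {g : MvPolynomial (Fin 2) R}
    (hg : ∀ d c, normalForm R n q (monomial d c * g) = 0) (u : MvPolynomial (Fin 2) R) :
    normalForm R n q (u * g) = 0 := by
  induction u using MvPolynomial.induction_on' with
  | monomial d c => exact hg d c
  | add u v hu hv => rw [add_mul, map_add, hu, hv, add_zero]

lemma normalForm_mul_eq_zero_of_mem (hn : 0 < n) {z : MvPolynomial (Fin 2) R}
    (hz : z ∈ ideal R n q) (u : MvPolynomial (Fin 2) R) : normalForm R n q (u * z) = 0 := by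
  induction hz using Submodule.span_induction generalizing u with
  | mem g hg =>
    apply normalForm_mul_eq_zero_of_monomial
    intro d c
    simp only [Set.mem_insert_iff, Set.mem_singleton_iff] at hg
    rcases hg with rfl | rfl | rfl
    · rw [X_pow_eq_monomial, monomial_mul, mul_one, normalForm_monomial, if_neg]
      simpa using reduceExp_add_fst_notMem (d 0) (d 1)
    · rw [X_pow_eq_monomial, monomial_mul, mul_one, normalForm_monomial, if_neg]
      simpa using reduceExp_add_snd_notMem hn (d 0) (d 1)
    · rw [mul_sub, map_sub, X_pow_eq_monomial, X_pow_eq_monomial, monomial_mul, monomial_mul,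
        normalForm_monomial, normalForm_monomial, sub_eq_zero]
      simp [reduceExp_add_snd hn]
  | zero => rw [mul_zero, map_zero]
  | add x y _ _ hx hy => rw [mul_add, map_add, hx, hy, add_zero]
  | smul a x _ hx => rw [smul_eq_mul, ← mul_assoc]; exact hx _

variable (R n q) in
noncomputable def normalFormQuotient (hn : 0 < n) :
    (MvPolynomial (Fin 2) R ⧸ ideal R n q) →ₗ[R] (ℕ × ℕ →₀ R) :=
  Submodule.liftQ ((ideal R n q).restrictScalars R) (normalForm R n q)
      (fun z hz => by simpa using normalForm_mul_eq_zero_of_mem hn hz 1) ∘ₗ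
    (Submodule.Quotient.restrictScalarsEquiv R (ideal R n q)).symm.toLinearMap

variable (R n q) in
noncomputable def staircaseMonomial (x : staircase n q) : MvPolynomial (Fin 2) R ⧸ ideal R n q :=
  Ideal.Quotient.mk _ (X 0 ^ x.1.1 * X 1 ^ x.1.2)

lemma normalFormQuotient_mk (hn : 0 < n) (z : MvPolynomial (Fin 2) R) :
    normalFormQuotient R n q hn (Ideal.Quotient.mk _ z) = normalForm R n q z :=
  rfl

lemma linearIndependent_staircaseMonomial (hn : 0 < n) :
    LinearIndependent R (staircaseMonomial R n q) := by
  apply LinearIndependent.of_comp (normalFormQuotient R n q hn)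
  convert Finsupp.basisSingleOne.linearIndependent.comp ((↑) : staircase n q → ℕ × ℕ)
    Subtype.coe_injective
  funext ⟨⟨a, b⟩, hx⟩
  have hb : b < n := by
    rcases mem_staircase.mp hx with ⟨-, hb⟩ | ⟨-, -, hb⟩
    · exact hb.trans (Nat.mod_lt q hn)
    · exact hb
  change normalFormQuotient R n q hn (staircaseMonomial R n q _) = Finsupp.single (a, b) 1
  rw [staircaseMonomial, normalFormQuotient_mk, normalForm_X_pow_mul_X_pow, reduceExp_of_lt hb,
    if_pos hx]

lemma X_pow_mul_sub_X_pow_mul_mem (m : ℕ) : X 0 ^ (n * m) - X 1 ^ (n * m) ∈ ideal R n q := by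
  rw [pow_mul, pow_mul]
  exact Ideal.mem_of_dvd _ (sub_dvd_pow_sub_pow _ _ m) (Ideal.subset_span (by simp))

lemma X_pow_mul_X_pow_sub_mem (a b : ℕ) :
    X 0 ^ a * X 1 ^ b - X 0 ^ (reduceExp n a b).1 * X 1 ^ (reduceExp n a b).2 ∈ ideal R n q := by
  convert Ideal.mul_mem_left _ (-(X 0 ^ a * X 1 ^ (b % n))) (X_pow_mul_sub_X_pow_mul_mem (b / n))
    using 1
  have hb : (X 1 : MvPolynomial (Fin 2) R) ^ b = X 1 ^ (n * (b / n)) * X 1 ^ (b % n) := by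
    rw [← pow_add, Nat.div_add_mod]
  rw [reduceExp, hb]
  ring

lemma X_pow_mul_X_pow_mem {a b : ℕ} (h : q ≤ a ∨ n * (q / n) ≤ a ∧ q % n ≤ b) :
    X 0 ^ a * X 1 ^ b ∈ ideal R n q := by
  rcases h with ha | ⟨ha, hb⟩
  · rw [← pow_mul_pow_sub (X 0) ha, mul_assoc]
    exact Ideal.mul_mem_right _ _ (Ideal.subset_span (by simp))
  · have hcorner : X 0 ^ (n * (q / n)) * X 1 ^ (q % n) ∈ ideal R n q := by
      convert add_mem (Ideal.subset_span (by simp) : X 1 ^ q ∈ ideal R n q)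
        (Ideal.mul_mem_left _ (X 1 ^ (q % n)) (X_pow_mul_sub_X_pow_mul_mem (q / n))) using 1
      have hq : (X 1 : MvPolynomial (Fin 2) R) ^ q = X 1 ^ (n * (q / n)) * X 1 ^ (q % n) := by
        rw [← pow_add, Nat.div_add_mod]
      rw [hq]
      ring
    rw [← pow_mul_pow_sub (X 0) ha, ← pow_mul_pow_sub (X 1) hb, mul_mul_mul_comm]
    exact Ideal.mul_mem_right _ _ hcorner

lemma mk_X_pow_mul_X_pow_mem_span (hn : 0 < n) (a b : ℕ) :
    Ideal.Quotient.mk (ideal R n q) (X 0 ^ a * X 1 ^ b) ∈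
      Submodule.span R (Set.range (staircaseMonomial R n q)) := by
  rw [Ideal.Quotient.eq.mpr (X_pow_mul_X_pow_sub_mem a b)]
  by_cases hx : reduceExp n a b ∈ staircase n q
  · exact Submodule.subset_span ⟨⟨_, hx⟩, rfl⟩
  · rw [Ideal.Quotient.eq_zero_iff_mem.mpr (X_pow_mul_X_pow_mem
      (le_of_notMem_staircase (Nat.mod_lt b hn) hx))]
    exact zero_mem _

lemma span_staircaseMonomial (hn : 0 < n) :
    ⊤ ≤ Submodule.span R (Set.range (staircaseMonomial R n q)) := by
  rintro x -
  obtain ⟨z, rfl⟩ := Ideal.Quotient.mk_surjective x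
  induction z using MvPolynomial.induction_on' with
  | monomial d c =>
    rw [monomial_eq, Finsupp.prod_fintype _ _ (by simp), Fin.prod_univ_two, ← smul_eq_C_mul,
      ← Ideal.Quotient.mkₐ_eq_mk R, map_smul, Ideal.Quotient.mkₐ_eq_mk]
    exact Submodule.smul_mem _ _ (mk_X_pow_mul_X_pow_mem_span hn _ _)
  | add u v hu hv => rw [map_add]; exact add_mem hu hv

theorem finrank_quotient [Nontrivial R] (hn : 0 < n) :
    Module.finrank R (MvPolynomial (Fin 2) R ⧸ ideal R n q) =
      q * (q % n) + n * (q / n) * (n - q % n) := by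
  rw [Module.finrank_eq_card_basis (.mk (linearIndependent_staircaseMonomial hn)
    (span_staircaseMonomial hn)), Fintype.card_coe, card_staircase]

theorem natCast_mul_sub_finrank_quotient [Nontrivial R] (hn : 0 < n) :
    (n * q : ℤ) - Module.finrank R (MvPolynomial (Fin 2) R ⧸ ideal R n q) =
      (q % n : ℕ) * (n - (q % n : ℕ) : ℤ) := by
  have hr := (Nat.mod_lt q hn).le
  have hq := Nat.div_add_mod q n
  rw [finrank_quotient hn]
  generalize q / n = c, q % n = r at hr hq ⊢
  subst hq
  push_cast [hr]
  ring

end Quotient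

end HilbertKunz

theorem pow_add_orderOf_natCast_mod (p n e : ℕ) :
    p ^ (e + orderOf (p : ZMod n)) % n = p ^ e % n := by
  rw [← ZMod.natCast_eq_natCast_iff']
  push_cast
  rw [pow_add, pow_orderOf_eq_one, mul_one]

theorem stmt2_general {k : Type*} [Field k] (p : ℕ)
    (n : ℕ) (hn : 1 < n)
    (φ : ℕ → ℤ)
    (hφ : ∀ e : ℕ, φ e = (n : ℤ) * (p : ℤ) ^ e -
      (Module.finrank k (MvPolynomial (Fin 2) k ⧸
        Ideal.span {(X 0 : MvPolynomial (Fin 2) k) ^ p ^ e, X 1 ^ p ^ e,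
          X 0 ^ n - X 1 ^ n}) : ℤ))
    (ω : ℕ) (hω : ω = orderOf ((p : ZMod n))) :
    ∀ e : ℕ, φ (e + ω) = φ e := by
  have hφ_residue (e : ℕ) : φ e = (p ^ e % n : ℕ) * (n - (p ^ e % n : ℕ) : ℤ) := by
    rw [hφ, ← Nat.cast_pow, HilbertKunz.natCast_mul_sub_finrank_quotient (by omega)]
  intro e
  rw [hφ_residue, hφ_residue, hω, pow_add_orderOf_natCast_mod]

/-- Theorem 1(2), first half: the periodic term `φ` of the Hilbert--Kunz function of
`k[[x,y]]/(x^n - y^n)` satisfies `φ(e + ω) = φ(e)` for all `e`, where `ω` is the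
multiplicative order of `p` modulo `n`. -/
theorem stmt2 {k : Type*} [Field k] (p : ℕ) (hp : p.Prime) [CharP k p]
    (n : ℕ) (hn : 1 < n) (hpn : ¬ p ∣ n)
    (φ : ℕ → ℤ)
    (hφ : ∀ e : ℕ, φ e = (n : ℤ) * (p : ℤ) ^ e -
      (Module.finrank k (MvPolynomial (Fin 2) k ⧸
        Ideal.span {(X 0 : MvPolynomial (Fin 2) k) ^ p ^ e, X 1 ^ p ^ e,
          X 0 ^ n - X 1 ^ n}) : ℤ))
    (ω : ℕ) (hω : ω = orderOf ((p : ZMod n))) :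
    ∀ e : ℕ, φ (e + ω) = φ e :=
  stmt2_general p n hn φ hφ ω hω
end

section
/- Let k be a field of prime characteristic p, let n be an integer with n > 1 that is not divisible by p, define φ(e) := n·p^e − dim_k (k[X,Y]/(X^{p^e}, Y^{p^e}, X^n − Y^n)) for each nonnegative integer e, let ω be the multiplicative order of p modulo n, and let π be the minimal positive period of φ. Then 2·π = ω if and only if ω is even and p^{ω/2} ≡ −1 (mod n). -/
/-!
Over any commutative ring `R`, the algebra `R[X, Y] ⧸ (X ^ n - Y ^ n)` is free over `R[Y]` with
basis `1, x, …, x ^ (n - 1)`. Write `q = n s + r` with `0 ≤ r < n`. Since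
`x ^ q = Y ^ (n s) x ^ r`, killing `Y ^ q` and `x ^ q` truncates the coordinate of `x ^ i` to
`R[Y] ⧸ (Y ^ q)` for `i < r` and to `R[Y] ⧸ (Y ^ (n s))` for `i ≥ r`. So the quotient
`R[X, Y] ⧸ (X ^ q, Y ^ q, X ^ n - Y ^ n)` is free of rank `n q - r (n - r)`.

Hence `φ e = r (n - r)` with `r` the residue of `p ^ e` modulo `n`. Since `r (n - r)` determines `r`
up to `r ↦ n - r`, a shift `m` is a period of `φ` exactly when `p ^ m ≡ ±1 (mod n)`. The least such
`m` is `ω / 2` precisely when `p ^ (ω / 2) ≡ -1`.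
-/

open MvPolynomial

namespace HilbertKunz

noncomputable section

/-- The coordinate of `x ^ i` survives modulo `Y ^ blockSize n q i`. -/
def blockSize (n q i : ℕ) : ℕ := if i < q % n then q else n * (q / n)

theorem blockSize_le (n q i : ℕ) : blockSize n q i ≤ q := by
  unfold blockSize
  split_ifs
  · exact le_rfl
  · exact Nat.mul_div_le q n

theorem sum_blockSize {n : ℕ} (hn : 0 < n) (q : ℕ) :
    ∑ m : Fin n, blockSize n q m = q % n * q + (n - q % n) * (n * (q / n)) := by
  rw [Fin.sum_univ_eq_sum_range (blockSize n q),
    ← Finset.sum_range_add_sum_Ico _ (Nat.mod_lt q hn).le]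
  have hlow : ∀ i ∈ Finset.range (q % n), blockSize n q i = q :=
    fun i hi => if_pos (Finset.mem_range.mp hi)
  have hhigh : ∀ i ∈ Finset.Ico (q % n) n, blockSize n q i = n * (q / n) :=
    fun i hi => if_neg (not_lt.mpr (Finset.mem_Ico.mp hi).1)
  rw [Finset.sum_congr rfl hlow, Finset.sum_congr rfl hhigh, Finset.sum_const, Finset.sum_const,
    Finset.card_range, Nat.card_Ico, smul_eq_mul, smul_eq_mul]

section Monomials

variable {R : Type*} [CommRing R] {n : ℕ} {A : Type*} [CommRing A] [Algebra R A] {x y : A} {q : ℕ}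

theorem span_pow_mul_pow_eq_top (hgen : Algebra.adjoin R {x, y} = ⊤) :
    Submodule.span R (Set.range fun ab : ℕ × ℕ => x ^ ab.1 * y ^ ab.2) = ⊤ := by
  rw [← Algebra.toSubmodule_eq_top, Algebra.adjoin_eq_span] at hgen
  rw [← hgen]
  congr 1
  ext z
  simp [Submonoid.mem_closure_pair]

theorem pow_mul_pow_eq_zero_of_blockSize_le (hx : x ^ q = 0) (hy : y ^ q = 0) (hxy : x ^ n = y ^ n)
    {i j : ℕ} (hij : blockSize n q i ≤ j) : x ^ i * y ^ j = 0 := by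
  unfold blockSize at hij
  split_ifs at hij with hi
  · rw [← Nat.sub_add_cancel hij, pow_add, hy, mul_zero, mul_zero]
  · have hxq : x ^ (q % n) * y ^ (n * (q / n)) = 0 := by
      rw [pow_mul, ← hxy, ← pow_mul, ← pow_add, Nat.mod_add_div, hx]
    have hsplit : x ^ i * y ^ j =
        x ^ (i - q % n) * y ^ (j - n * (q / n)) * (x ^ (q % n) * y ^ (n * (q / n))) := by
      conv_lhs => rw [← Nat.sub_add_cancel (not_lt.mp hi), ← Nat.sub_add_cancel hij]
      ring
    rw [hsplit, hxq, mul_zero]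

theorem span_blockMonomials_eq_top (hn : 0 < n) (hx : x ^ q = 0) (hy : y ^ q = 0)
    (hxy : x ^ n = y ^ n) (hgen : Algebra.adjoin R {x, y} = ⊤) :
    Submodule.span R (Set.range fun i : (Σ m : Fin n, Fin (blockSize n q m)) =>
      x ^ (i.1 : ℕ) * y ^ (i.2 : ℕ)) = ⊤ := by
  rw [eq_top_iff, ← span_pow_mul_pow_eq_top hgen, Submodule.span_le]
  rintro _ ⟨⟨a, b⟩, rfl⟩
  have hred : x ^ a * y ^ b = x ^ (a % n) * y ^ (b + n * (a / n)) := by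
    rw [pow_add y, pow_mul y, ← hxy, ← pow_mul, ← mul_assoc, mul_right_comm, ← pow_add,
      Nat.mod_add_div]
  by_cases hb : b + n * (a / n) < blockSize n q (a % n)
  · exact Submodule.subset_span ⟨⟨⟨a % n, Nat.mod_lt a hn⟩, ⟨_, hb⟩⟩, hred.symm⟩
  · change x ^ a * y ^ b ∈ _
    rw [hred, pow_mul_pow_eq_zero_of_blockSize_le hx hy hxy (not_lt.mp hb)]
    exact zero_mem _

end Monomials

variable (R : Type*) [CommRing R] (n : ℕ)

/-- `X ^ n - Y ^ n`, with `Y` the variable of the coefficient ring `R[Y]`. -/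
def xPowSubCYPow : Polynomial (Polynomial R) :=
  Polynomial.X ^ n - Polynomial.C (Polynomial.X ^ n)

abbrev Binomial := AdjoinRoot (xPowSubCYPow R n)

variable {R n}

theorem root_pow_eq :
    AdjoinRoot.root (xPowSubCYPow R n) ^ n =
      algebraMap (Polynomial R) (Binomial R n) (Polynomial.X ^ n) := by
  have h : AdjoinRoot.mk (xPowSubCYPow R n)
      (Polynomial.X ^ n - Polynomial.C (Polynomial.X ^ n)) = 0 := AdjoinRoot.mk_self
  rw [map_sub, sub_eq_zero] at h
  rw [← AdjoinRoot.mk_X, ← map_pow, h, AdjoinRoot.mk_C, AdjoinRoot.algebraMap_eq]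

theorem root_pow_eq_smul (a : ℕ) :
    AdjoinRoot.root (xPowSubCYPow R n) ^ a =
      (Polynomial.X ^ (n * (a / n)) : Polynomial R) •
        AdjoinRoot.root (xPowSubCYPow R n) ^ (a % n) := by
  conv_lhs => rw [← Nat.div_add_mod a n, pow_add, pow_mul, root_pow_eq, ← map_pow, ← pow_mul]
  rw [Algebra.smul_def]

theorem xPowSubCYPow_monic (hn : 0 < n) : (xPowSubCYPow R n).Monic :=
  Polynomial.monic_X_pow_sub_C _ hn.ne'

variable (R n) in
def binomialIdeal (q : ℕ) : Ideal (MvPolynomial (Fin 2) R) :=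
  Ideal.span {X 0 ^ q, X 1 ^ q, X 0 ^ n - X 1 ^ n}

variable (R n) in
def evalRoot : MvPolynomial (Fin 2) R →ₐ[R] Binomial R n :=
  aeval ![AdjoinRoot.root _, algebraMap (Polynomial R) _ Polynomial.X]

@[simp]
theorem evalRoot_X_zero : evalRoot R n (X 0) = AdjoinRoot.root _ := by
  simp [evalRoot]

@[simp]
theorem evalRoot_X_one : evalRoot R n (X 1) = algebraMap (Polynomial R) _ Polynomial.X := by
  simp [evalRoot]

variable (R n) in
def quotMonomial (q : ℕ) (i : Σ m : Fin n, Fin (blockSize n q m)) :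
    MvPolynomial (Fin 2) R ⧸ binomialIdeal R n q :=
  Ideal.Quotient.mk _ (X 0) ^ (i.1 : ℕ) * Ideal.Quotient.mk _ (X 1) ^ (i.2 : ℕ)

theorem adjoin_mk_X_eq_top (I : Ideal (MvPolynomial (Fin 2) R)) :
    Algebra.adjoin R {Ideal.Quotient.mk I (X 0), Ideal.Quotient.mk I (X 1)} = ⊤ := by
  have hrange : Set.range (X : Fin 2 → MvPolynomial (Fin 2) R) = {X 0, X 1} := by
    ext
    simp [Fin.exists_fin_two, eq_comm]
  rw [← Ideal.Quotient.mkₐ_eq_mk R, ← Set.image_pair, Algebra.adjoin_image, ← hrange,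
    MvPolynomial.adjoin_range_X, Algebra.map_top, AlgHom.range_eq_top]
  exact Ideal.Quotient.mkₐ_surjective R I

theorem span_quotMonomial (hn : 0 < n) (q : ℕ) :
    Submodule.span R (Set.range (quotMonomial R n q)) = ⊤ := by
  have hmem : ∀ z ∈ ({X 0 ^ q, X 1 ^ q, X 0 ^ n - X 1 ^ n} : Set (MvPolynomial (Fin 2) R)),
      z ∈ binomialIdeal R n q := fun _ hz => Ideal.subset_span hz
  refine span_blockMonomials_eq_top hn ?_ ?_ ?_ (adjoin_mk_X_eq_top _)
  · rw [← map_pow, Ideal.Quotient.eq_zero_iff_mem]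
    exact hmem _ (by simp)
  · rw [← map_pow, Ideal.Quotient.eq_zero_iff_mem]
    exact hmem _ (by simp)
  · rw [← map_pow, ← map_pow, Ideal.Quotient.eq]
    exact hmem _ (by simp)

variable [Nontrivial R]

theorem natDegree_xPowSubCYPow : (xPowSubCYPow R n).natDegree = n :=
  Polynomial.natDegree_X_pow_sub_C

variable (R n) in
def rootBasis (hn : 0 < n) : Module.Basis (Fin n) (Polynomial R) (Binomial R n) :=
  (AdjoinRoot.powerBasis' (xPowSubCYPow_monic hn)).basis.reindex
    (finCongr (by rw [AdjoinRoot.powerBasis'_dim, natDegree_xPowSubCYPow]))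

theorem rootBasis_apply (hn : 0 < n) (m : Fin n) :
    rootBasis R n hn m = AdjoinRoot.root (xPowSubCYPow R n) ^ (m : ℕ) := by
  rw [rootBasis, Module.Basis.reindex_apply, PowerBasis.basis_eq_pow, AdjoinRoot.powerBasis'_gen]
  rfl

theorem rootBasis_repr_root_pow (hn : 0 < n) (a : ℕ) :
    (rootBasis R n hn).repr (AdjoinRoot.root (xPowSubCYPow R n) ^ a) =
      Finsupp.single ⟨a % n, Nat.mod_lt a hn⟩ (Polynomial.X ^ (n * (a / n))) := by
  rw [root_pow_eq_smul, map_smul, ← rootBasis_apply hn ⟨a % n, Nat.mod_lt a hn⟩,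
    Module.Basis.repr_self, Finsupp.smul_single, smul_eq_mul, mul_one]

/-- The coordinates below `r` only receive `x ^ (j + r)` with `j + r ≥ n`, which carries the factor
`x ^ n = Y ^ n`. -/
theorem X_pow_dvd_rootBasis_repr_mul_root_pow (hn : 0 < n) {r : ℕ} (hr : r < n)
    (c : Binomial R n) {m : Fin n} (hm : (m : ℕ) < r) :
    (Polynomial.X ^ n : Polynomial R) ∣
      (rootBasis R n hn).repr (c * AdjoinRoot.root (xPowSubCYPow R n) ^ r) m := by
  rw [← (rootBasis R n hn).sum_repr c, Finset.sum_mul, map_sum, Finsupp.finsetSum_apply]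
  refine Finset.dvd_sum fun j _ => ?_
  rw [smul_mul_assoc, map_smul, rootBasis_apply, ← pow_add, Finsupp.smul_apply, smul_eq_mul,
    rootBasis_repr_root_pow hn, Finsupp.single_apply]
  refine Dvd.dvd.mul_left ?_ _
  by_cases hjr : (j : ℕ) + r < n
  · rw [if_neg]
    · exact dvd_zero _
    · rw [Fin.ext_iff, Fin.val_mk, Nat.mod_eq_of_lt hjr]
      omega
  · rw [Nat.div_eq_of_lt_le (k := 1) (by omega) (by omega), mul_one]
    split_ifs
    · exact dvd_rfl
    · exact dvd_zero _

variable (R) in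
def toBlocks (hn : 0 < n) (q : ℕ) :
    Binomial R n →ₗ[R] ∀ m : Fin n, AdjoinRoot (Polynomial.X ^ blockSize n q m : Polynomial R) :=
  LinearMap.pi fun m => (AdjoinRoot.mkₐ _).toLinearMap ∘ₗ
    (Finsupp.lapply m : (Fin n →₀ Polynomial R) →ₗ[R] Polynomial R) ∘ₗ
      ((rootBasis R n hn).repr.restrictScalars R).toLinearMap

theorem toBlocks_apply (hn : 0 < n) (q : ℕ) (s : Binomial R n) (m : Fin n) :
    toBlocks R hn q s m = AdjoinRoot.mk _ ((rootBasis R n hn).repr s m) := rfl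

theorem toBlocks_eq_zero (hn : 0 < n) {q : ℕ} {s : Binomial R n}
    (hs : ∀ m : Fin n,
      (Polynomial.X ^ blockSize n q m : Polynomial R) ∣ (rootBasis R n hn).repr s m) :
    toBlocks R hn q s = 0 := by
  funext m
  exact AdjoinRoot.mk_eq_zero.mpr (hs m)

theorem toBlocks_X_pow_smul (hn : 0 < n) (q : ℕ) (s : Binomial R n) :
    toBlocks R hn q ((Polynomial.X ^ q : Polynomial R) • s) = 0 :=
  toBlocks_eq_zero hn fun m => by
    rw [map_smul, Finsupp.smul_apply, smul_eq_mul]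
    exact (pow_dvd_pow _ (blockSize_le n q m)).mul_right _

theorem toBlocks_mul_root_pow (hn : 0 < n) (q : ℕ) (s : Binomial R n) :
    toBlocks R hn q (s * AdjoinRoot.root (xPowSubCYPow R n) ^ q) = 0 := by
  refine toBlocks_eq_zero hn fun m => ?_
  rw [root_pow_eq_smul, mul_smul_comm, map_smul, Finsupp.smul_apply, smul_eq_mul, blockSize]
  split_ifs with hm
  · obtain ⟨c, hc⟩ := X_pow_dvd_rootBasis_repr_mul_root_pow hn (Nat.mod_lt q hn) s hm
    have hq : q ≤ n * (q / n) + n := by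
      have := Nat.div_add_mod q n
      have := Nat.mod_lt q hn
      omega
    rw [hc, ← mul_assoc, ← pow_add]
    exact (pow_dvd_pow _ hq).mul_right _
  · exact dvd_mul_right _ _

theorem toBlocks_X_pow_smul_rootBasis (hn : 0 < n) (q j : ℕ) (m : Fin n) :
    toBlocks R hn q ((Polynomial.X ^ j : Polynomial R) • rootBasis R n hn m) =
      Pi.single m (AdjoinRoot.root _ ^ j) := by
  funext m'
  rw [toBlocks_apply, map_smul, Module.Basis.repr_self, Finsupp.smul_single, smul_eq_mul, mul_one,
    Finsupp.single_apply]
  split_ifs with h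
  · subst h
    rw [Pi.single_eq_same, map_pow, AdjoinRoot.mk_X]
  · rw [Pi.single_eq_of_ne (Ne.symm h), map_zero]

theorem toBlocks_evalRoot_of_mem (hn : 0 < n) {q : ℕ} {z : MvPolynomial (Fin 2) R}
    (hz : z ∈ binomialIdeal R n q) : toBlocks R hn q (evalRoot R n z) = 0 := by
  obtain ⟨a, z', hz', rfl⟩ := Ideal.mem_span_insert.mp hz
  obtain ⟨b, c, rfl⟩ := Ideal.mem_span_pair.mp hz'
  have hrel : evalRoot R n (X 0 ^ n - X 1 ^ n) = 0 := by
    simp [root_pow_eq]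
  simp only [map_add, map_mul (evalRoot R n), hrel, mul_zero, add_zero,
    map_pow (evalRoot R n), evalRoot_X_zero, evalRoot_X_one, toBlocks_mul_root_pow, zero_add]
  rw [← map_pow, mul_comm, ← Algebra.smul_def, toBlocks_X_pow_smul]

variable (R) in
def quotToBlocks (hn : 0 < n) (q : ℕ) :
    (MvPolynomial (Fin 2) R ⧸ binomialIdeal R n q) →ₗ[R]
      ∀ m : Fin n, AdjoinRoot (Polynomial.X ^ blockSize n q m : Polynomial R) :=
  ((binomialIdeal R n q).restrictScalars R).liftQ (toBlocks R hn q ∘ₗ (evalRoot R n).toLinearMap)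
      (fun _ hz => toBlocks_evalRoot_of_mem hn hz) ∘ₗ
    (Submodule.Quotient.restrictScalarsEquiv R _).symm.toLinearMap

theorem quotToBlocks_mk (hn : 0 < n) (q : ℕ) (z : MvPolynomial (Fin 2) R) :
    quotToBlocks R hn q (Ideal.Quotient.mk _ z) = toBlocks R hn q (evalRoot R n z) := rfl

variable (R) in
def blockBasis (n q : ℕ) (m : Fin n) :
    Module.Basis (Fin (blockSize n q m)) R
      (AdjoinRoot (Polynomial.X ^ blockSize n q m : Polynomial R)) :=
  (AdjoinRoot.powerBasis' (Polynomial.monic_X_pow _)).basis.reindex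
    (finCongr (by rw [AdjoinRoot.powerBasis'_dim, Polynomial.natDegree_X_pow]))

theorem blockBasis_apply (n q : ℕ) (m : Fin n) (j : Fin (blockSize n q m)) :
    blockBasis R n q m j = AdjoinRoot.root _ ^ (j : ℕ) := by
  rw [blockBasis, Module.Basis.reindex_apply, PowerBasis.basis_eq_pow, AdjoinRoot.powerBasis'_gen]
  rfl

theorem quotToBlocks_quotMonomial (hn : 0 < n) (q : ℕ) (i : Σ m : Fin n, Fin (blockSize n q m)) :
    quotToBlocks R hn q (quotMonomial R n q i) = Pi.basis (blockBasis R n q) i := by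
  obtain ⟨m, j⟩ := i
  rw [quotMonomial, ← map_pow, ← map_pow, ← map_mul, quotToBlocks_mk, map_mul, map_pow, map_pow,
    evalRoot_X_zero, evalRoot_X_one, ← map_pow, mul_comm, ← Algebra.smul_def,
    ← rootBasis_apply (R := R) hn, toBlocks_X_pow_smul_rootBasis, Pi.basis_apply, blockBasis_apply]

theorem linearIndependent_quotMonomial (hn : 0 < n) (q : ℕ) :
    LinearIndependent R (quotMonomial R n q) := by
  have hcomp : quotToBlocks R hn q ∘ quotMonomial R n q = Pi.basis (blockBasis R n q) := by
    ext1 i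
    exact quotToBlocks_quotMonomial hn q i
  exact .of_comp _ (hcomp ▸ (Pi.basis _).linearIndependent)

variable (R n) in
def quotBasis (hn : 0 < n) (q : ℕ) :
    Module.Basis (Σ m : Fin n, Fin (blockSize n q m)) R
      (MvPolynomial (Fin 2) R ⧸ binomialIdeal R n q) :=
  Module.Basis.mk (linearIndependent_quotMonomial hn q) (span_quotMonomial hn q).ge

theorem finrank_quotient_binomialIdeal (hn : 0 < n) (q : ℕ) :
    (Module.finrank R (MvPolynomial (Fin 2) R ⧸ binomialIdeal R n q) : ℤ) =
      n * q - (q % n : ℕ) * (n - (q % n : ℕ)) := by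
  rw [Module.finrank_eq_card_basis (quotBasis R n hn q), Fintype.card_sigma]
  simp only [Fintype.card_fin]
  rw [sum_blockSize hn]
  have hr := Nat.mod_lt q hn
  have hq := Nat.div_add_mod q n
  generalize q % n = r at *
  generalize q / n = s at *
  subst hq
  push_cast [Nat.cast_sub hr.le]
  ring

end

end HilbertKunz

theorem two_mul_eq_orderOf_iff {M : Type*} [Monoid M] [HasDistribNeg M] {u : M}
    (hu : IsOfFinOrder u) {π : ℕ} (hπ : IsLeast {m | 0 < m ∧ (u ^ m = 1 ∨ u ^ m = -1)} π) :
    2 * π = orderOf u ↔ Even (orderOf u) ∧ u ^ (orderOf u / 2) = -1 := by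
  obtain ⟨⟨hπ_pos, hπ_pm⟩, hπ_least⟩ := hπ
  constructor
  · intro h
    rcases hπ_pm with h1 | h1
    · have := Nat.le_of_dvd hπ_pos (orderOf_dvd_of_pow_eq_one h1)
      omega
    · exact ⟨⟨π, by omega⟩, by rwa [← h, Nat.mul_div_cancel_left _ two_pos]⟩
  · rintro ⟨heven, hhalf⟩
    have hω := hu.orderOf_pos
    obtain ⟨t, ht⟩ := heven
    have hle : π ≤ orderOf u / 2 := hπ_least ⟨by omega, Or.inr hhalf⟩
    have hsq : u ^ (2 * π) = 1 := by
      rw [mul_comm, pow_mul]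
      rcases hπ_pm with h1 | h1 <;> simp [h1]
    have := Nat.le_of_dvd (by omega) (orderOf_dvd_of_pow_eq_one hsq)
    omega

namespace ZMod

variable {n : ℕ} [NeZero n]

theorem val_mul_sub_val_eq_iff (x y : ZMod n) :
    (x.val : ℤ) * (n - x.val) = y.val * (n - y.val) ↔ y = x ∨ y = -x := by
  have hx := x.val_lt
  have hy := y.val_lt
  constructor
  · intro h
    have hfac : ((y.val : ℤ) - x.val) * (n - x.val - y.val) = 0 := by linear_combination -h
    rcases mul_eq_zero.mp hfac with h | h
    · exact Or.inl (val_injective n (by omega))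
    · refine Or.inr (eq_neg_of_add_eq_zero_left ?_)
      have hsum : y.val + x.val = n := by omega
      rw [← natCast_zmod_val y, ← natCast_zmod_val x, ← Nat.cast_add, hsum, natCast_self]
  · rintro (rfl | rfl)
    · rfl
    · rw [neg_val]
      split_ifs with h0
      · simp [h0]
      · push_cast [Nat.cast_sub hx.le]
        ring

theorem periodic_val_mul_sub_val_iff (u : ZMod n) (m : ℕ) :
    (∀ e, ((u ^ (e + m)).val : ℤ) * (n - (u ^ (e + m)).val) = (u ^ e).val * (n - (u ^ e).val))
      ↔ u ^ m = 1 ∨ u ^ m = -1 := by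
  constructor
  · intro h
    have h0 := h 0
    rwa [zero_add, pow_zero, eq_comm, val_mul_sub_val_eq_iff] at h0
  · intro h e
    rw [eq_comm, val_mul_sub_val_eq_iff, pow_add]
    rcases h with h | h <;> simp [h]

end ZMod

open HilbertKunz in
theorem stmt4_general {k : Type*} [Field k] (p : ℕ) (hp : p.Prime)
    (n : ℕ) (hn : 1 < n) (hpn : ¬ p ∣ n)
    (φ : ℕ → ℤ)
    (hφ : ∀ e : ℕ, φ e = (n : ℤ) * (p : ℤ) ^ e -
      (Module.finrank k (MvPolynomial (Fin 2) k ⧸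
        Ideal.span {(X 0 : MvPolynomial (Fin 2) k) ^ p ^ e, X 1 ^ p ^ e,
          X 0 ^ n - X 1 ^ n}) : ℤ))
    (ω : ℕ) (hω : ω = orderOf ((p : ZMod n)))
    (π : ℕ) (hπ : IsLeast {m : ℕ | 0 < m ∧ ∀ e : ℕ, φ (e + m) = φ e} π) :
    2 * π = ω ↔ (Even ω ∧ (p : ℤ) ^ (ω / 2) ≡ -1 [ZMOD n]) := by
  have : NeZero n := ⟨by omega⟩
  have hφ_val : ∀ e, φ e = ((p : ZMod n) ^ e).val * (n - ((p : ZMod n) ^ e).val) := by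
    intro e
    have hdim := finrank_quotient_binomialIdeal (R := k) (n := n) (by omega) (p ^ e)
    rw [binomialIdeal] at hdim
    rw [hφ e, hdim, ← Nat.cast_pow (α := ZMod n), ZMod.val_natCast]
    push_cast
    ring
  have hperiods : {m : ℕ | 0 < m ∧ ∀ e : ℕ, φ (e + m) = φ e} =
      {m | 0 < m ∧ ((p : ZMod n) ^ m = 1 ∨ (p : ZMod n) ^ m = -1)} := by
    ext m
    simp only [Set.mem_ofPred_eq, hφ_val, ZMod.periodic_val_mul_sub_val_iff]
  have hunit : IsUnit (p : ZMod n) :=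
    (ZMod.isUnit_iff_coprime p n).mpr (hp.coprime_iff_not_dvd.mpr hpn)
  rw [hperiods] at hπ
  rw [hω, two_mul_eq_orderOf_iff hunit.isOfFinOrder hπ, ← ZMod.intCast_eq_intCast_iff]
  push_cast
  rfl

/-- Theorem 1(3): with `φ`, `ω`, and the minimal positive period `π` as in Theorem 1(2),
we have `2π = ω` if and only if `ω` is even and `p^{ω/2} ≡ -1 (mod n)`. -/
theorem stmt4 {k : Type*} [Field k] (p : ℕ) (hp : p.Prime) [CharP k p]
    (n : ℕ) (hn : 1 < n) (hpn : ¬ p ∣ n)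
    (φ : ℕ → ℤ)
    (hφ : ∀ e : ℕ, φ e = (n : ℤ) * (p : ℤ) ^ e -
      (Module.finrank k (MvPolynomial (Fin 2) k ⧸
        Ideal.span {(X 0 : MvPolynomial (Fin 2) k) ^ p ^ e, X 1 ^ p ^ e,
          X 0 ^ n - X 1 ^ n}) : ℤ))
    (ω : ℕ) (hω : ω = orderOf ((p : ZMod n)))
    (π : ℕ) (hπ : IsLeast {m : ℕ | 0 < m ∧ ∀ e : ℕ, φ (e + m) = φ e} π) :
    2 * π = ω ↔ (Even ω ∧ (p : ℤ) ^ (ω / 2) ≡ -1 [ZMOD n]) :=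
  stmt4_general p hp n hn hpn φ hφ ω hω π hπ
end

section
/- Let k be a field of prime characteristic p with p ≡ 2 (mod 7). Then for every nonnegative integer e, the dimension over k of k[X,Y]/(X^{p^e}, Y^{p^e}, X^7 − Y^7) equals 7·p^e − 6 if e ≡ 0 (mod 3), equals 7·p^e − 10 if e ≡ 1 (mod 3), and equals 7·p^e − 12 if e ≡ 2 (mod 3). -/
/-!
Write `q = n s + r` with `r < n`. Modulo `X^n - Y^n` every monomial `X^a Y^b` is congruent to
`X^(a % n) Y^(b + n (a / n))`; sending a polynomial to the coefficients of these normal forms on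
the staircase `{X^j Y^i : j < r, i < q} ∪ {X^j Y^i : r ≤ j < n, i < n s}` kills the ideal
`(X^q, Y^q, X^n - Y^n)`, so those monomials are independent in the quotient. They also span it,
since a normal form above the staircase is a multiple of `Y^q` or of `X^r Y^(n s) ≡ X^q`.
Hence the quotient has dimension `r q + (n - r)(q - r)`. For `n = 7` and `q = p^e` with
`p ≡ 2 (mod 7)`, `r = 2^(e % 3) ∈ {1, 2, 4}`.
-/

open MvPolynomial

section
variable {R σ M : Type*} [CommRing R] [AddCommGroup M] [Module R M]

theorem MvPolynomial.map_eq_zero_of_mem_span (φ : MvPolynomial σ R →ₗ[R] M)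
    {s : Set (MvPolynomial σ R)} (hs : ∀ g ∈ s, ∀ d, φ (monomial d 1 * g) = 0)
    {f : MvPolynomial σ R} (hf : f ∈ Ideal.span s) : φ f = 0 := by
  have hgen : ∀ g ∈ s, ∀ u, φ (u * g) = 0 := by
    intro g hg u
    induction u using MvPolynomial.induction_on' with
    | monomial d c =>
      rw [show monomial d c = c • monomial d 1 by rw [smul_monomial, smul_eq_mul, mul_one],
        smul_mul_assoc, map_smul, hs g hg d, smul_zero]
    | add u v hu hv => rw [add_mul, map_add, hu, hv, add_zero]
  suffices ∀ u, φ (u * f) = 0 by simpa using this 1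
  induction hf using Submodule.span_induction with
  | mem g hg => exact hgen g hg
  | zero => simp
  | add x y _ _ hx hy => intro u; rw [mul_add, map_add, hx, hy, add_zero]
  | smul a x _ hx => intro u; rw [smul_eq_mul, ← mul_assoc]; exact hx _

end

namespace PowSubPowQuotient

open Finset

variable (R : Type*) [CommRing R] (n q : ℕ)

noncomputable def ideal : Ideal (MvPolynomial (Fin 2) R) :=
  Ideal.span {X 0 ^ q, X 1 ^ q, X 0 ^ n - X 1 ^ n}

def stair : Finset (ℕ × ℕ) :=
  range (q % n) ×ˢ range q ∪ Ico (q % n) n ×ˢ range (q - q % n)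

theorem mem_stair {x : ℕ × ℕ} : x ∈ stair n q ↔
    x.1 < q % n ∧ x.2 < q ∨ q % n ≤ x.1 ∧ x.1 < n ∧ x.2 < q - q % n := by
  simp only [stair, mem_union, mem_product, mem_range, mem_Ico, and_assoc]

theorem card_stair (hn : 0 < n) : #(stair n q) = q % n * q + (n - q % n) * (q - q % n) := by
  have hr : q % n < n := Nat.mod_lt q hn
  rw [stair, card_union_of_disjoint, card_product, card_product, card_range, card_range,
    card_range, Nat.card_Ico]
  refine disjoint_left.2 fun x hx hx' => ?_
  simp only [mem_product, mem_range, mem_Ico] at hx hx'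
  omega

-- `X^a Y^b ≡ X^(a % n) Y^(b + n * (a / n))` modulo `X^n - Y^n`.
def normalForm (d : Fin 2 →₀ ℕ) : ℕ × ℕ := (d 0 % n, d 1 + n * (d 0 / n))

noncomputable def coords : MvPolynomial (Fin 2) R →ₗ[R] (stair n q → R) :=
  (basisMonomials (Fin 2) R).constr R fun d x => if normalForm n d = x then 1 else 0

variable {R n q}

theorem coords_monomial (d : Fin 2 →₀ ℕ) (c : R) (x : stair n q) :
    coords R n q (monomial d c) x = if normalForm n d = x then c else 0 := by
  rw [show monomial d c = c • basisMonomials (Fin 2) R d by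
    rw [coe_basisMonomials, smul_monomial, smul_eq_mul, mul_one]]
  rw [coords, map_smul, Module.Basis.constr_basis, Pi.smul_apply, smul_eq_mul, mul_ite, mul_one,
    mul_zero]

theorem coords_monomial_of_notMem {d : Fin 2 →₀ ℕ} (hd : normalForm n d ∉ stair n q)
    (c : R) : coords R n q (monomial d c) = 0 := by
  ext x
  rw [coords_monomial, if_neg (show normalForm n d ≠ x from fun h => hd (h ▸ x.2)),
    Pi.zero_apply]

theorem normalForm_add_single_zero (d : Fin 2 →₀ ℕ) (a : ℕ) :
    normalForm n (d + Finsupp.single 0 a) = ((d 0 + a) % n, d 1 + n * ((d 0 + a) / n)) := by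
  simp [normalForm]

theorem normalForm_add_single_one (d : Fin 2 →₀ ℕ) (b : ℕ) :
    normalForm n (d + Finsupp.single 1 b) = (d 0 % n, d 1 + b + n * (d 0 / n)) := by
  simp [normalForm]

theorem normalForm_add_single_self (hn : 0 < n) (d : Fin 2 →₀ ℕ) :
    normalForm n (d + Finsupp.single 0 n) = normalForm n (d + Finsupp.single 1 n) := by
  rw [normalForm_add_single_zero, normalForm_add_single_one, Nat.add_mod_right,
    Nat.add_div_right _ hn]
  exact Prod.ext rfl (by ring)

theorem normalForm_add_single_one_notMem (d : Fin 2 →₀ ℕ) :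
    normalForm n (d + Finsupp.single 1 q) ∉ stair n q := by
  rw [normalForm_add_single_one, mem_stair]
  omega

theorem normalForm_add_single_zero_notMem (hn : 0 < n) (d : Fin 2 →₀ ℕ) :
    normalForm n (d + Finsupp.single 0 q) ∉ stair n q := by
  have := Nat.div_add_mod (d 0 + q) n
  have := Nat.div_add_mod (d 0) n
  have := Nat.mod_lt (d 0 + q) hn
  have := Nat.mod_lt q hn
  have := Nat.mod_lt (d 0) hn
  -- if `(d 0 + q) % n` wraps below `q % n`, the carry `n * ((d 0 + q) / n)` is at least `q`
  have h := @Nat.add_mod_eq_ite n (d 0) q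
  rw [normalForm_add_single_zero, mem_stair]
  split_ifs at h <;> omega

theorem coords_eq_zero_of_mem_ideal (hn : 0 < n) {f : MvPolynomial (Fin 2) R}
    (hf : f ∈ ideal R n q) : coords R n q f = 0 := by
  refine map_eq_zero_of_mem_span _ ?_ hf
  rintro g (rfl | rfl | rfl) d <;> simp only [X_pow_eq_monomial, monomial_mul, one_mul, mul_sub]
  · exact coords_monomial_of_notMem (normalForm_add_single_zero_notMem hn d) 1
  · exact coords_monomial_of_notMem (normalForm_add_single_one_notMem d) 1
  · ext x
    rw [map_sub, Pi.sub_apply, coords_monomial, coords_monomial, normalForm_add_single_self hn,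
      sub_self, Pi.zero_apply]

theorem normalForm_single_add_single {j : ℕ} (hj : j < n) (i : ℕ) :
    normalForm n (Finsupp.single 0 j + Finsupp.single 1 i) = (j, i) := by
  simp [normalForm, Nat.mod_eq_of_lt hj, Nat.div_eq_of_lt hj]

theorem coords_X_pow_mul_X_pow (hn : 0 < n) (x : stair n q) :
    coords R n q (X 0 ^ x.1.1 * X 1 ^ x.1.2) = Pi.single x 1 := by
  have hx : x.1.1 < n := by have := (mem_stair n q).1 x.2; have := Nat.mod_lt q hn; omega
  ext y
  rw [X_pow_eq_monomial, X_pow_eq_monomial, monomial_mul, one_mul, coords_monomial,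
    normalForm_single_add_single hx, Pi.single_apply]
  exact if_congr (Subtype.ext_iff.symm.trans eq_comm) rfl rfl

theorem mk_X_zero_pow_mul_eq (m : ℕ) :
    Ideal.Quotient.mk (ideal R n q) (X 0 ^ (n * m)) = Ideal.Quotient.mk _ (X 1 ^ (n * m)) := by
  have h : Ideal.Quotient.mk (ideal R n q) (X 0 ^ n) = Ideal.Quotient.mk _ (X 1 ^ n) :=
    Ideal.Quotient.eq.2 (Ideal.subset_span (by simp))
  rw [pow_mul, pow_mul, map_pow _ (X 0 ^ n), map_pow _ (X 1 ^ n), h]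

theorem mk_X_pow_mul_X_pow_eq (a b : ℕ) :
    Ideal.Quotient.mk (ideal R n q) (X 0 ^ a * X 1 ^ b)
      = Ideal.Quotient.mk _ (X 0 ^ (a % n) * X 1 ^ (b + n * (a / n))) := by
  conv_lhs => rw [← Nat.mod_add_div a n]
  simp only [pow_add, map_mul, mk_X_zero_pow_mul_eq]
  ring

theorem mk_X_pow_mul_X_pow_eq_zero {j i : ℕ} (hj : j < n) (h : (j, i) ∉ stair n q) :
    Ideal.Quotient.mk (ideal R n q) (X 0 ^ j * X 1 ^ i) = 0 := by
  rw [mem_stair] at h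
  have hq := Nat.mod_add_div q n
  by_cases hi : q ≤ i
  · obtain ⟨i, rfl⟩ := Nat.exists_eq_add_of_le hi
    rw [Ideal.Quotient.eq_zero_iff_mem, pow_add]
    exact Ideal.mul_mem_left _ _ (Ideal.mul_mem_right _ _ (Ideal.subset_span (by simp)))
  · obtain ⟨j, rfl⟩ : ∃ j', j = q % n + j' := ⟨j - q % n, by omega⟩
    obtain ⟨i, rfl⟩ : ∃ i', i = n * (q / n) + i' := ⟨i - n * (q / n), by omega⟩
    have hXq : Ideal.Quotient.mk (ideal R n q) (X 0 ^ q) = 0 :=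
      Ideal.Quotient.eq_zero_iff_mem.2 (Ideal.subset_span (by simp))
    calc Ideal.Quotient.mk (ideal R n q) (X 0 ^ (q % n + j) * X 1 ^ (n * (q / n) + i))
        = Ideal.Quotient.mk _ (X 0 ^ (q % n)) * Ideal.Quotient.mk _ (X 1 ^ (n * (q / n)))
          * Ideal.Quotient.mk _ (X 0 ^ j * X 1 ^ i) := by
          simp only [pow_add, map_mul]; ring
      _ = Ideal.Quotient.mk _ (X 0 ^ q) * Ideal.Quotient.mk _ (X 0 ^ j * X 1 ^ i) := by
          rw [← mk_X_zero_pow_mul_eq, ← map_mul, ← pow_add, hq]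
      _ = 0 := by rw [hXq, zero_mul]

variable (R n q) in
noncomputable def stairFamily (x : stair n q) : MvPolynomial (Fin 2) R ⧸ ideal R n q :=
  Ideal.Quotient.mk _ (X 0 ^ x.1.1 * X 1 ^ x.1.2)

theorem linearIndependent_stairFamily (hn : 0 < n) :
    LinearIndependent R (stairFamily R n q) := by
  let coordsQuot : (MvPolynomial (Fin 2) R ⧸ ideal R n q) →ₗ[R] stair n q → R :=
    ((ideal R n q).restrictScalars R).liftQ (coords R n q)
        (fun _ hf => coords_eq_zero_of_mem_ideal hn hf) ∘ₗ
      (Submodule.Quotient.restrictScalarsEquiv R (ideal R n q)).symm.toLinearMap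
  have h : coordsQuot ∘ stairFamily R n q = Pi.basisFun R (stair n q) := by
    ext1 x
    exact (coords_X_pow_mul_X_pow hn x).trans (Pi.basisFun_apply R _ x).symm
  exact .of_comp coordsQuot (h ▸ (Pi.basisFun R _).linearIndependent)

theorem mk_X_pow_mul_X_pow_mem_span (hn : 0 < n) (a b : ℕ) :
    Ideal.Quotient.mk (ideal R n q) (X 0 ^ a * X 1 ^ b)
      ∈ Submodule.span R (Set.range (stairFamily R n q)) := by
  rw [mk_X_pow_mul_X_pow_eq]
  by_cases h : (a % n, b + n * (a / n)) ∈ stair n q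
  · exact Submodule.subset_span ⟨⟨_, h⟩, rfl⟩
  · rw [mk_X_pow_mul_X_pow_eq_zero (Nat.mod_lt a hn) h]
    exact Submodule.zero_mem _

theorem span_stairFamily (hn : 0 < n) :
    ⊤ ≤ Submodule.span R (Set.range (stairFamily R n q)) := by
  rintro x -
  obtain ⟨f, rfl⟩ := Ideal.Quotient.mk_surjective x
  induction f using MvPolynomial.induction_on' with
  | monomial d c =>
    rw [monomial_eq, Finsupp.prod_fintype _ _ (by simp), Fin.prod_univ_two, ← smul_eq_C_mul,
      ← Ideal.Quotient.mkₐ_eq_mk R, map_smul]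
    exact Submodule.smul_mem _ _ (mk_X_pow_mul_X_pow_mem_span hn _ _)
  | add f g hf hg => rw [map_add]; exact Submodule.add_mem _ hf hg

variable (R n q) in
noncomputable def stairBasis (hn : 0 < n) :
    Module.Basis (stair n q) R (MvPolynomial (Fin 2) R ⧸ ideal R n q) :=
  .mk (linearIndependent_stairFamily hn) (span_stairFamily hn)

theorem finrank_quotient_ideal [Nontrivial R] (hn : 0 < n) :
    Module.finrank R (MvPolynomial (Fin 2) R ⧸ ideal R n q)
      = q % n * q + (n - q % n) * (q - q % n) := by
  rw [Module.finrank_eq_card_basis (stairBasis R n q hn), Fintype.card_coe, card_stair n q hn]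

end PowSubPowQuotient

theorem Nat.pow_mod_seven_of_mod_eq_two {p : ℕ} (hp : p % 7 = 2) (e : ℕ) :
    p ^ e % 7 = 2 ^ (e % 3) := by
  rw [Nat.pow_mod, hp]
  conv_lhs => rw [← Nat.div_add_mod e 3, pow_add, pow_mul, Nat.mul_mod, Nat.pow_mod]
  have := Nat.mod_lt e (show 0 < 3 by norm_num)
  interval_cases e % 3 <;> simp

theorem stmt6_general {k : Type*} [Field k] (p : ℕ)
    (hpmod : p % 7 = 2) (e : ℕ) :
    (e % 3 = 0 →
      (Module.finrank k (MvPolynomial (Fin 2) k ⧸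
        Ideal.span {(X 0 : MvPolynomial (Fin 2) k) ^ p ^ e, X 1 ^ p ^ e,
          X 0 ^ 7 - X 1 ^ 7}) : ℤ) = 7 * (p : ℤ) ^ e - 6) ∧
    (e % 3 = 1 →
      (Module.finrank k (MvPolynomial (Fin 2) k ⧸
        Ideal.span {(X 0 : MvPolynomial (Fin 2) k) ^ p ^ e, X 1 ^ p ^ e,
          X 0 ^ 7 - X 1 ^ 7}) : ℤ) = 7 * (p : ℤ) ^ e - 10) ∧
    (e % 3 = 2 →
      (Module.finrank k (MvPolynomial (Fin 2) k ⧸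
        Ideal.span {(X 0 : MvPolynomial (Fin 2) k) ^ p ^ e, X 1 ^ p ^ e,
          X 0 ^ 7 - X 1 ^ 7}) : ℤ) = 7 * (p : ℤ) ^ e - 12) := by
  have hdim := PowSubPowQuotient.finrank_quotient_ideal (R := k) (q := p ^ e) (by norm_num : 0 < 7)
  have hmod := Nat.pow_mod_seven_of_mod_eq_two hpmod e
  rw [PowSubPowQuotient.ideal] at hdim
  rw [hdim, ← Nat.cast_pow]
  generalize p ^ e = q at hmod ⊢
  refine ⟨fun he => ?_, fun he => ?_, fun he => ?_⟩ <;>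
    rw [he] at hmod <;> norm_num at hmod <;> rw [hmod] <;> omega

/-- The period-3 example: for `p ≡ 2 (mod 7)`, the `k`-dimension of
`k[X,Y]/(X^{p^e}, Y^{p^e}, X^7 - Y^7)` is `7p^e - 6`, `7p^e - 10`, or `7p^e - 12`
according as `e ≡ 0, 1, 2 (mod 3)`. -/
theorem stmt6 {k : Type*} [Field k] (p : ℕ) (hp : p.Prime) [CharP k p]
    (hpmod : p % 7 = 2) (e : ℕ) :
    (e % 3 = 0 →
      (Module.finrank k (MvPolynomial (Fin 2) k ⧸
        Ideal.span {(X 0 : MvPolynomial (Fin 2) k) ^ p ^ e, X 1 ^ p ^ e,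
          X 0 ^ 7 - X 1 ^ 7}) : ℤ) = 7 * (p : ℤ) ^ e - 6) ∧
    (e % 3 = 1 →
      (Module.finrank k (MvPolynomial (Fin 2) k ⧸
        Ideal.span {(X 0 : MvPolynomial (Fin 2) k) ^ p ^ e, X 1 ^ p ^ e,
          X 0 ^ 7 - X 1 ^ 7}) : ℤ) = 7 * (p : ℤ) ^ e - 10) ∧
    (e % 3 = 2 →
      (Module.finrank k (MvPolynomial (Fin 2) k ⧸
        Ideal.span {(X 0 : MvPolynomial (Fin 2) k) ^ p ^ e, X 1 ^ p ^ e,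
          X 0 ^ 7 - X 1 ^ 7}) : ℤ) = 7 * (p : ℤ) ^ e - 12) :=
  stmt6_general p hpmod e
end

section
/- Let k be a field of prime characteristic p with p ≡ 2 (mod 15) or p ≡ 13 (mod 15). Then for every nonnegative integer e, the dimension over k of k[X,Y]/(X^{p^e}, Y^{p^e}, X^{15} − Y^{15}) equals 15·p^e − 14 if e ≡ 0 (mod 4), equals 15·p^e − 26 if e ≡ 1 (mod 4), equals 15·p^e − 44 if e ≡ 2 (mod 4), and equals 15·p^e − 56 if e ≡ 3 (mod 4). -/
/-!
Modulo `X^n - Y^n` every monomial equals some `X^a Y^b` with `a < n`, and moving multiples of `n`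
between the two exponents shows that such a monomial survives modulo `X^q, Y^q` exactly when
`b < q` and `a + n⌊b/n⌋ < q`. These standard monomials span the quotient, and they are independent
because the functional reading off the normal form `(a mod n, b + n⌊a/n⌋)` of each monomial kills
the ideal. Writing `q = nm + r`, they fill `[0,n) × [0,q)` minus the block `[r,n) × [q-r,q)`, so
the dimension is `nq - r(n-r)` over every field. For `q = p^e` with `p ≡ ±2 (mod 15)` the residue
`r` cycles with period 4 through `1, ±2, 4, ±8`, and `r(15-r)` is `14, 26, 44, 56`.
-/

open MvPolynomial Finset

theorem MvPolynomial.constr_basisMonomials_mul_monomial {σ R V : Type*} [CommSemiring R]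
    [AddCommMonoid V] [Module R V] (F : (σ →₀ ℕ) → V) (d : σ →₀ ℕ) (g : MvPolynomial σ R) :
    (basisMonomials σ R).constr R F (g * monomial d 1) =
      (basisMonomials σ R).constr R (fun m => F (m + d)) g := by
  have constr_monomial : ∀ (G : (σ →₀ ℕ) → V) m c,
      (basisMonomials σ R).constr R G (monomial m c) = c • G m := by
    intro G m c
    rw [show monomial m c = c • basisMonomials σ R m by simp [smul_monomial], map_smul,
      Module.Basis.constr_basis]
  induction g using MvPolynomial.induction_on' with
  | monomial m c => rw [monomial_mul, mul_one, constr_monomial, constr_monomial]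
  | add u v hu hv => rw [add_mul, map_add, map_add, hu, hv]

section DiagonalQuotient

variable (k : Type*) [Field k] (n q : ℕ)

def standardExponents : Finset (ℕ × ℕ) :=
  (range n ×ˢ range q).filter fun s => s.1 + n * (s.2 / n) < q

def normalExponent (s : ℕ × ℕ) : ℕ × ℕ := (s.1 % n, s.2 + n * (s.1 / n))

variable {k n q}

theorem mem_standardExponents {s : ℕ × ℕ} :
    s ∈ standardExponents n q ↔ s.1 < n ∧ s.2 < q ∧ s.1 + n * (s.2 / n) < q := by
  simp [standardExponents, and_assoc]

theorem normalExponent_of_mem {s : ℕ × ℕ} (hs : s ∈ standardExponents n q) :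
    normalExponent n s = s := by
  obtain ⟨h1, -, -⟩ := mem_standardExponents.mp hs
  simp [normalExponent, Nat.mod_eq_of_lt h1, Nat.div_eq_of_lt h1]

theorem normalExponent_add_left_eq_add_right (hn : 0 < n) (a b : ℕ) :
    normalExponent n (a + n, b) = normalExponent n (a, b + n) := by
  simp only [normalExponent, Nat.add_mod_right, Nat.add_div_right _ hn, mul_add, mul_one]
  ext <;> simp only; omega

theorem normalExponent_add_left_notMem (hn : 0 < n) (a b : ℕ) :
    normalExponent n (a + q, b) ∉ standardExponents n q := by
  have h := Nat.div_add_mod (a + q) n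
  simp only [normalExponent, mem_standardExponents]
  rw [Nat.add_mul_div_left _ _ hn, mul_add]
  omega

theorem normalExponent_add_right_notMem (a b : ℕ) :
    normalExponent n (a, b + q) ∉ standardExponents n q := by
  rw [normalExponent, mem_standardExponents]
  omega

theorem standardExponents_eq_sdiff (hn : 0 < n) :
    standardExponents n q =
      (range n ×ˢ range q) \ (Ico (q % n) n ×ˢ Ico (q - q % n) q) := by
  have multiple_le : ∀ B M, n * B < n * M + n → n * B ≤ n * M := fun B M => by
    rw [Nat.mul_le_mul_left_iff hn, ← mul_add_one, Nat.mul_lt_mul_left hn]; omega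
  ext ⟨a, b⟩
  have hq := Nat.div_add_mod q n
  have hb := Nat.div_add_mod b n
  have hbn := Nat.mod_lt b hn
  have h1 := multiple_le (b / n) (q / n)
  have h2 := multiple_le (b / n + 1) (q / n)
  rw [mul_add_one] at h2
  simp only [mem_standardExponents, mem_sdiff, mem_product, mem_range, mem_Ico]
  have hqn := Nat.mod_lt q hn
  -- `omega` only divides by numerals, so the quotients by `n` become opaque variables
  generalize q / n = m, q % n = r, b / n = B, b % n = s at *
  omega

theorem card_standardExponents (hn : 0 < n) :
    #(standardExponents n q) + (n - q % n) * (q % n) = n * q := by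
  have hsub : Ico (q % n) n ×ˢ Ico (q - q % n) q ⊆ range n ×ˢ range q :=
    product_subset_product (fun a ha => by simp_all) (fun b hb => by simp_all)
  have h := card_sdiff_add_card_eq_card hsub
  rw [card_product, card_product, Nat.card_Ico, Nat.card_Ico, Nat.sub_sub_self (Nat.mod_le q n),
    card_range, card_range] at h
  rwa [standardExponents_eq_sdiff hn]

theorem pow_mul_pow_eq_zero_or_eq_standard {A : Type*} [CommSemiring A] {x y : A} (hn : 0 < n)
    (hxy : x ^ n = y ^ n) (hx : x ^ q = 0) (hy : y ^ q = 0) (a b : ℕ) :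
    x ^ a * y ^ b = 0 ∨ ∃ s ∈ standardExponents n q, x ^ a * y ^ b = x ^ s.1 * y ^ s.2 := by
  have shift : ∀ a b j, x ^ (a + n * j) * y ^ b = x ^ a * y ^ (b + n * j) := fun a b j => by
    rw [pow_add, pow_mul, hxy, ← pow_mul]; ring
  have hnormal : x ^ a * y ^ b = x ^ (a % n) * y ^ (b + n * (a / n)) := by
    rw [← shift, Nat.mod_add_div]
  set b' := b + n * (a / n)
  by_cases hb : q ≤ b'
  · left
    rw [hnormal, pow_eq_zero_of_le hb hy, mul_zero]
  by_cases ha : q ≤ a % n + n * (b' / n)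
  · left
    rw [hnormal, ← Nat.mod_add_div b' n, ← shift, pow_eq_zero_of_le ha hx, zero_mul]
  · exact .inr ⟨(a % n, b'),
      mem_standardExponents.mpr ⟨Nat.mod_lt _ hn, not_le.mp hb, not_le.mp ha⟩, hnormal⟩

variable (k n q) in
noncomputable abbrev diagonalIdeal : Ideal (MvPolynomial (Fin 2) k) :=
  Ideal.span {X 0 ^ q, X 1 ^ q, X 0 ^ n - X 1 ^ n}

variable (k n q) in
noncomputable def normalFormCoeff : MvPolynomial (Fin 2) k →ₗ[k] (standardExponents n q → k) :=
  (basisMonomials (Fin 2) k).constr k fun m s =>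
    if (s : ℕ × ℕ) = normalExponent n (m 0, m 1) then 1 else 0

theorem normalFormCoeff_X_pow_mul_X_pow (a b : ℕ) :
    normalFormCoeff k n q (X 0 ^ a * X 1 ^ b) =
      fun s : standardExponents n q =>
        if (s : ℕ × ℕ) = normalExponent n (a, b) then (1 : k) else 0 := by
  rw [X_pow_eq_monomial, X_pow_eq_monomial, monomial_mul, one_mul]
  exact (basisMonomials (Fin 2) k).constr_basis k _ _ |>.trans (by simp)

theorem normalFormCoeff_eq_zero_of_mem (hn : 0 < n) {z : MvPolynomial (Fin 2) k}
    (hz : z ∈ diagonalIdeal k n q) :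
    normalFormCoeff k n q z = 0 := by
  obtain ⟨f, z₁, hz₁, rfl⟩ := Ideal.mem_span_insert.mp hz
  obtain ⟨g, z₂, hz₂, rfl⟩ := Ideal.mem_span_insert.mp hz₁
  obtain ⟨h, rfl⟩ := Ideal.mem_span_singleton'.mp hz₂
  set F : (Fin 2 →₀ ℕ) → standardExponents n q → k := fun m s =>
    if (s : ℕ × ℕ) = normalExponent n (m 0, m 1) then 1 else 0
  have shift_eq_zero : ∀ d : Fin 2 →₀ ℕ, (∀ m, normalExponent n ((m + d) 0, (m + d) 1) ∉
      standardExponents n q) → (fun m => F (m + d)) = 0 := fun d hd => by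
    funext m s
    simp only [F, Pi.zero_apply, ite_eq_right_iff, one_ne_zero, imp_false]
    exact fun h => hd m (h ▸ s.2)
  have hX : (fun m => F (m + Finsupp.single 0 q)) = 0 :=
    shift_eq_zero _ fun m => by simpa using normalExponent_add_left_notMem hn (m 0) (m 1)
  have hY : (fun m => F (m + Finsupp.single 1 q)) = 0 :=
    shift_eq_zero _ fun m => by simpa using normalExponent_add_right_notMem (m 0) (m 1)
  have hXY : (fun m => F (m + Finsupp.single 0 n)) = fun m => F (m + Finsupp.single 1 n) := by
    funext m
    simp [F, normalExponent_add_left_eq_add_right hn]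
  change (basisMonomials (Fin 2) k).constr k F _ = 0
  simp only [X_pow_eq_monomial, mul_sub, map_add, map_sub,
    MvPolynomial.constr_basisMonomials_mul_monomial]
  rw [hX, hY, hXY, sub_self, map_zero, LinearMap.zero_apply, LinearMap.zero_apply, zero_add,
    zero_add]

variable (k n q) in
noncomputable def standardMonomialCombination :
    (standardExponents n q → k) →ₗ[k] MvPolynomial (Fin 2) k ⧸ diagonalIdeal k n q :=
  Fintype.linearCombination k fun s => Ideal.Quotient.mkₐ k _ (X 0 ^ s.1.1 * X 1 ^ s.1.2)

theorem monomial_eq_smul_X_pow_mul_X_pow (m : Fin 2 →₀ ℕ) (c : k) :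
    monomial m c = c • (X 0 ^ m 0 * X 1 ^ m 1) := by
  have hm : m = Finsupp.single 0 (m 0) + Finsupp.single 1 (m 1) := by
    ext i; fin_cases i <;> simp
  rw [X_pow_eq_monomial, X_pow_eq_monomial, monomial_mul, one_mul, smul_monomial, smul_eq_mul,
    mul_one, ← hm]

theorem standardMonomialCombination_surjective (hn : 0 < n) :
    Function.Surjective (standardMonomialCombination k n q) := by
  set π := Ideal.Quotient.mkₐ k (diagonalIdeal k n q)
  have hπ : ∀ z ∈ ({X 0 ^ q, X 1 ^ q, X 0 ^ n - X 1 ^ n} : Set (MvPolynomial (Fin 2) k)),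
      π z = 0 := fun z hz => by
    rw [Ideal.Quotient.mkₐ_eq_mk, Ideal.Quotient.eq_zero_iff_mem]
    exact Ideal.subset_span hz
  have hxy : π (X 0) ^ n = π (X 1) ^ n := by
    rw [← sub_eq_zero, ← map_pow, ← map_pow, ← map_sub, hπ _ (by simp)]
  have hx : π (X 0) ^ q = 0 := by rw [← map_pow, hπ _ (by simp)]
  have hy : π (X 1) ^ q = 0 := by rw [← map_pow, hπ _ (by simp)]
  have hmon : ∀ a b,
      π (X 0 ^ a * X 1 ^ b) ∈ LinearMap.range (standardMonomialCombination k n q) := by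
    intro a b
    rw [map_mul, map_pow, map_pow]
    rcases pow_mul_pow_eq_zero_or_eq_standard hn hxy hx hy a b with h | ⟨s, hs, h⟩
    · rw [h]; exact zero_mem _
    · exact ⟨Pi.single ⟨s, hs⟩ 1, by
        rw [standardMonomialCombination, Fintype.linearCombination_apply_single, one_smul, h,
          map_mul, map_pow, map_pow]⟩
  rw [← LinearMap.range_eq_top, eq_top_iff]
  rintro z -
  obtain ⟨P, rfl⟩ := Ideal.Quotient.mkₐ_surjective k _ z
  induction P using MvPolynomial.induction_on' with
  | monomial m c =>
    rw [monomial_eq_smul_X_pow_mul_X_pow, map_smul]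
    exact Submodule.smul_mem _ _ (hmon _ _)
  | add P Q hP hQ => rw [map_add]; exact add_mem hP hQ

theorem standardMonomialCombination_injective (hn : 0 < n) :
    Function.Injective (standardMonomialCombination k n q) := by
  rw [← LinearMap.ker_eq_bot, Submodule.eq_bot_iff]
  intro v hv
  set P : MvPolynomial (Fin 2) k := ∑ s, v s • (X 0 ^ s.1.1 * X 1 ^ s.1.2)
  have hP : P ∈ diagonalIdeal k n q := by
    rw [← Ideal.Quotient.eq_zero_iff_mem, ← Ideal.Quotient.mkₐ_eq_mk k,
      ← LinearMap.mem_ker.mp hv]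
    simp [P, standardMonomialCombination, Fintype.linearCombination_apply, map_sum]
  calc v = normalFormCoeff k n q P := by
        ext t
        simp [P, map_sum, normalFormCoeff_X_pow_mul_X_pow,
          fun s : standardExponents n q => normalExponent_of_mem s.2]
    _ = 0 := normalFormCoeff_eq_zero_of_mem hn hP

theorem finrank_quotient_diagonalIdeal (hn : 0 < n) :
    Module.finrank k (MvPolynomial (Fin 2) k ⧸ diagonalIdeal k n q) + (n - q % n) * (q % n) =
      n * q := by
  rw [← (LinearEquiv.ofBijective _ ⟨standardMonomialCombination_injective hn,
    standardMonomialCombination_surjective hn⟩).finrank_eq, Module.finrank_fintype_fun_eq_card,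
    Fintype.card_coe, card_standardExponents hn]

end DiagonalQuotient

theorem Nat.pow_mod_eq_pow_mod_of_pow_mod_eq_one {x m k : ℕ} (h : x ^ k % m = 1) (e : ℕ) :
    x ^ e % m = x ^ (e % k) % m := by
  conv_lhs => rw [← Nat.div_add_mod e k, pow_add, pow_mul, Nat.mul_mod, Nat.pow_mod, h, one_pow,
    ← Nat.mul_mod, one_mul]

theorem stmt7_general {k : Type*} [Field k] (p : ℕ)
    (hpmod : p % 15 = 2 ∨ p % 15 = 13) (e : ℕ) :
    (e % 4 = 0 →
      (Module.finrank k (MvPolynomial (Fin 2) k ⧸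
        Ideal.span {(X 0 : MvPolynomial (Fin 2) k) ^ p ^ e, X 1 ^ p ^ e,
          X 0 ^ 15 - X 1 ^ 15}) : ℤ) = 15 * (p : ℤ) ^ e - 14) ∧
    (e % 4 = 1 →
      (Module.finrank k (MvPolynomial (Fin 2) k ⧸
        Ideal.span {(X 0 : MvPolynomial (Fin 2) k) ^ p ^ e, X 1 ^ p ^ e,
          X 0 ^ 15 - X 1 ^ 15}) : ℤ) = 15 * (p : ℤ) ^ e - 26) ∧
    (e % 4 = 2 →
      (Module.finrank k (MvPolynomial (Fin 2) k ⧸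
        Ideal.span {(X 0 : MvPolynomial (Fin 2) k) ^ p ^ e, X 1 ^ p ^ e,
          X 0 ^ 15 - X 1 ^ 15}) : ℤ) = 15 * (p : ℤ) ^ e - 44) ∧
    (e % 4 = 3 →
      (Module.finrank k (MvPolynomial (Fin 2) k ⧸
        Ideal.span {(X 0 : MvPolynomial (Fin 2) k) ^ p ^ e, X 1 ^ p ^ e,
          X 0 ^ 15 - X 1 ^ 15}) : ℤ) = 15 * (p : ℤ) ^ e - 56) := by
  have hdim := finrank_quotient_diagonalIdeal (k := k) (n := 15) (q := p ^ e) (by norm_num)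
  dsimp only [diagonalIdeal] at hdim
  have hp4 : p ^ 4 % 15 = 1 := by rw [Nat.pow_mod]; rcases hpmod with h | h <;> rw [h]
  have hr := Nat.pow_mod_eq_pow_mod_of_pow_mod_eq_one hp4 e
  rw [← Nat.cast_pow]
  refine ⟨fun he => ?_, fun he => ?_, fun he => ?_, fun he => ?_⟩ <;>
  · rw [Nat.pow_mod p (e % 4), he] at hr
    rcases hpmod with h | h <;> rw [h] at hr <;> norm_num at hr <;> rw [hr] at hdim <;> omega

/-- The period-4 example: for `p ≡ ±2 (mod 15)`, the `k`-dimension of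
`k[X,Y]/(X^{p^e}, Y^{p^e}, X^15 - Y^15)` is `15p^e - 14`, `15p^e - 26`,
`15p^e - 44`, or `15p^e - 56` according as `e ≡ 0, 1, 2, 3 (mod 4)`. -/
theorem stmt7 {k : Type*} [Field k] (p : ℕ) (hp : p.Prime) [CharP k p]
    (hpmod : p % 15 = 2 ∨ p % 15 = 13) (e : ℕ) :
    (e % 4 = 0 →
      (Module.finrank k (MvPolynomial (Fin 2) k ⧸
        Ideal.span {(X 0 : MvPolynomial (Fin 2) k) ^ p ^ e, X 1 ^ p ^ e,
          X 0 ^ 15 - X 1 ^ 15}) : ℤ) = 15 * (p : ℤ) ^ e - 14) ∧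
    (e % 4 = 1 →
      (Module.finrank k (MvPolynomial (Fin 2) k ⧸
        Ideal.span {(X 0 : MvPolynomial (Fin 2) k) ^ p ^ e, X 1 ^ p ^ e,
          X 0 ^ 15 - X 1 ^ 15}) : ℤ) = 15 * (p : ℤ) ^ e - 26) ∧
    (e % 4 = 2 →
      (Module.finrank k (MvPolynomial (Fin 2) k ⧸
        Ideal.span {(X 0 : MvPolynomial (Fin 2) k) ^ p ^ e, X 1 ^ p ^ e,
          X 0 ^ 15 - X 1 ^ 15}) : ℤ) = 15 * (p : ℤ) ^ e - 44) ∧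
    (e % 4 = 3 →
      (Module.finrank k (MvPolynomial (Fin 2) k ⧸
        Ideal.span {(X 0 : MvPolynomial (Fin 2) k) ^ p ^ e, X 1 ^ p ^ e,
          X 0 ^ 15 - X 1 ^ 15}) : ℤ) = 15 * (p : ℤ) ^ e - 56) :=
  stmt7_general p hpmod e
end

section
/- For every positive integer π, there exist prime numbers n and p with p not divisible by n such that the class of p in the multiplicative group of units of Z/nZ has order exactly 2π and p^π ≡ −1 (mod n). -/
/-!
Take a prime `n ≡ 1 (mod 2π)`. The unit group of `ZMod n` is cyclic of order `n - 1`, so it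
contains an element of order `2π`, and by Dirichlet's theorem that class contains a prime `p`.
Since `p ^ π` is a square root of `1` different from `1` in the field `ZMod n`, it is `-1`.
-/

lemma IsCyclic.exists_orderOf_eq_of_dvd {G : Type*} [Group G] [IsCyclic G] [Finite G] {d : ℕ}
    (hd : d ∣ Nat.card G) : ∃ g : G, orderOf g = d := by
  obtain ⟨g, hg⟩ := IsCyclic.exists_ofOrder_eq_natCard (α := G)
  exact ⟨g ^ (orderOf g / d), orderOf_pow_orderOf_div (hg ▸ Nat.card_pos.ne') (hg ▸ hd)⟩

lemma pow_eq_neg_one_of_orderOf_eq_two_mul {R : Type*} [CommRing R] [IsDomain R] {x : R}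
    {m : ℕ} (hm : 0 < m) (hx : orderOf x = 2 * m) : x ^ m = -1 :=
  ((IsPrimitiveRoot.orderOf x).pow (by rw [hx]; omega) (hx.trans (mul_comm 2 m))
    |>.eq_neg_one_of_two_right)

lemma ZMod.exists_prime_orderOf_natCast_eq {n d : ℕ} [Fact n.Prime] (hd : d ∣ n - 1) :
    ∃ p : ℕ, p.Prime ∧ ¬ n ∣ p ∧ orderOf (p : ZMod n) = d := by
  obtain ⟨u, hu⟩ := IsCyclic.exists_orderOf_eq_of_dvd (G := (ZMod n)ˣ) (d := d)
    (by rwa [Nat.card_eq_fintype_card, ZMod.card_units])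
  obtain ⟨p, -, hp, hpu⟩ := Nat.forall_exists_prime_gt_and_eq_mod u.isUnit 0
  refine ⟨p, hp, fun hnp => u.ne_zero ?_, by rw [hpu, orderOf_units, hu]⟩
  rwa [← hpu, ZMod.natCast_eq_zero_iff]

/-- Number-theoretic core of the Main Theorem: for every positive integer `π` there are
primes `n` and `p`, with `p` not divisible by `n`, such that `p` has multiplicative
order exactly `2π` modulo `n` and `p^π ≡ -1 (mod n)`. -/
theorem stmt9 (π : ℕ) (hπ : 0 < π) :
    ∃ n p : ℕ, n.Prime ∧ p.Prime ∧ ¬ n ∣ p ∧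
      orderOf ((p : ZMod n)) = 2 * π ∧ (p : ℤ) ^ π ≡ -1 [ZMOD n] := by
  obtain ⟨n, hn, -, hn1⟩ := Nat.exists_prime_gt_modEq_one 0 (k := 2 * π) (by omega)
  have : Fact n.Prime := ⟨hn⟩
  obtain ⟨p, hp, hnp, hord⟩ :=
    ZMod.exists_prime_orderOf_natCast_eq ((Nat.modEq_iff_dvd' hn.one_le).mp hn1.symm)
  refine ⟨n, p, hn, hp, hnp, hord, ?_⟩
  rw [← ZMod.intCast_eq_intCast_iff]
  push_cast
  exact pow_eq_neg_one_of_orderOf_eq_two_mul hπ hord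
end

section
/- Let k be a field, and let q, b, n be natural numbers with 1 ≤ b ≤ q and n dividing q − b. Then in the polynomial ring k[X,Y], the ideal generated by X^q, Y^q, and X^n − Y^n equals the ideal generated by X^b·Y^{q−b}, Y^q, and X^n − Y^n. -/
open MvPolynomial

/-- Replacing the generator `X^q` by `X^b·Y^{q-b}`:
`(X^q, Y^q, X^n - Y^n) = (X^b·Y^{q-b}, Y^q, X^n - Y^n)` when `1 ≤ b ≤ q` and
`n ∣ q - b`. -/
theorem stmt11 {k : Type*} [Field k] (q b n : ℕ) (hb1 : 1 ≤ b) (hbq : b ≤ q)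
    (hn : n ∣ q - b) :
    Ideal.span {(X 0 : MvPolynomial (Fin 2) k) ^ q, X 1 ^ q, X 0 ^ n - X 1 ^ n} =
      Ideal.span {(X 0 : MvPolynomial (Fin 2) k) ^ b * X 1 ^ (q - b), X 1 ^ q,
        X 0 ^ n - X 1 ^ n} := by
  obtain ⟨m, hm⟩ := hn
  have hkey : (X 0 : MvPolynomial (Fin 2) k) ^ q - X 0 ^ b * X 1 ^ (q - b)
      = X 0 ^ b * (((X 0) ^ n) ^ m - ((X 1) ^ n) ^ m) := by
    rw [mul_sub, ← pow_mul, ← pow_mul, ← pow_add, ← hm, Nat.add_sub_cancel' hbq]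
  have hdvd : ((X 0 : MvPolynomial (Fin 2) k) ^ n - X 1 ^ n) ∣
      (X 0 ^ q - X 0 ^ b * X 1 ^ (q - b)) := by
    rw [hkey]
    exact Dvd.dvd.mul_left (sub_dvd_pow_sub_pow _ _ m) _
  obtain ⟨c, hc⟩ := hdvd
  apply le_antisymm <;> rw [Ideal.span_le] <;> intro p hp <;>
      simp only [Set.mem_insert_iff, Set.mem_singleton_iff] at hp <;>
      rcases hp with h | h | h <;> subst h
  · have h1 : (X 0 : MvPolynomial (Fin 2) k) ^ b * X 1 ^ (q - b) ∈
        Ideal.span {(X 0 : MvPolynomial (Fin 2) k) ^ b * X 1 ^ (q - b), X 1 ^ q,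
          X 0 ^ n - X 1 ^ n} := Ideal.subset_span (by simp)
    have h2 : ((X 0 : MvPolynomial (Fin 2) k) ^ n - X 1 ^ n) ∈
        Ideal.span {(X 0 : MvPolynomial (Fin 2) k) ^ b * X 1 ^ (q - b), X 1 ^ q,
          X 0 ^ n - X 1 ^ n} := Ideal.subset_span (by simp)
    have : (X 0 : MvPolynomial (Fin 2) k) ^ q
        = X 0 ^ b * X 1 ^ (q - b) + (X 0 ^ n - X 1 ^ n) * c := by
      rw [← hc]; ring
    rw [this]
    exact Ideal.add_mem _ h1 (Ideal.mul_mem_right _ _ h2)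
  · exact Ideal.subset_span (by simp)
  · exact Ideal.subset_span (by simp)
  · have h1 : (X 0 : MvPolynomial (Fin 2) k) ^ q ∈
        Ideal.span {(X 0 : MvPolynomial (Fin 2) k) ^ q, X 1 ^ q,
          X 0 ^ n - X 1 ^ n} := Ideal.subset_span (by simp)
    have h2 : ((X 0 : MvPolynomial (Fin 2) k) ^ n - X 1 ^ n) ∈
        Ideal.span {(X 0 : MvPolynomial (Fin 2) k) ^ q, X 1 ^ q,
          X 0 ^ n - X 1 ^ n} := Ideal.subset_span (by simp)
    have : (X 0 : MvPolynomial (Fin 2) k) ^ b * X 1 ^ (q - b)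
        = X 0 ^ q - (X 0 ^ n - X 1 ^ n) * c := by
      rw [← hc]; ring
    rw [this]
    exact Ideal.sub_mem _ h1 (Ideal.mul_mem_right _ _ h2)
  · exact Ideal.subset_span (by simp)
  · exact Ideal.subset_span (by simp)
end

section
/- Let k be a field of prime characteristic p, let n be an integer with n > 1 that is not divisible by p, let e be a nonnegative integer with q := p^e > n, and let b be the unique integer with p^e ≡ b (mod n) and 1 ≤ b ≤ n−1. Then the images in k[X,Y]/(X^q, Y^q, X^n − Y^n) of the monomials X^i·Y^j, where 0 ≤ i < n, 0 ≤ j < q, and not both i ≥ b and j ≥ q − b, form a basis of k[X,Y]/(X^q, Y^q, X^n − Y^n) as a vector space over k. -/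
/-!
Using `X^n = Y^n`, every monomial `X^i Y^j` equals `X^(i % n) Y^(j + (i / n) n)` in the quotient,
and a monomial `X^i Y^j` with `i < n` that is not standard vanishes there: either `q ≤ j`, or it
is a multiple of `X^b Y^(q - b) = X^b X^(q - b) = X^q`, because `n ∣ q - b`. Hence the standard
monomials span. Conversely, sending each monomial to its reduced exponent when that is standard
(and to `0` otherwise) extends to a linear map which kills the monomial multiples of the three
generators, hence the ideal, and maps the standard monomials to distinct basis vectors; this gives
linear independence.
-/

open MvPolynomial

theorem pow_mul_pow_eq_pow_mod_mul_pow {M : Type*} [CommMonoid M] {x y : M} {n : ℕ}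
    (hxy : x ^ n = y ^ n) (i j : ℕ) :
    x ^ i * y ^ j = x ^ (i % n) * y ^ (j + i / n * n) := by
  conv_lhs => rw [← Nat.mod_add_div' i n]
  rw [pow_add, pow_add, pow_mul', pow_mul', hxy]
  ac_rfl

theorem pow_mul_pow_eq_zero {M₀ : Type*} [CommMonoidWithZero M₀] {x y : M₀} {n q i j : ℕ}
    (hx : x ^ q = 0) (hy : y ^ q = 0) (hxy : x ^ n = y ^ n)
    (h : q ≤ j ∨ (q % n ≤ i ∧ q - q % n ≤ j)) : x ^ i * y ^ j = 0 := by
  obtain hj | ⟨hi, hj⟩ := h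
  · rw [pow_eq_zero_of_le hj hy, mul_zero]
  · have hcorner : x ^ (q % n) * y ^ (q - q % n) = 0 := by
      rw [Nat.div_mul_self_eq_mod_sub_self.symm, ← zero_add (q / n * n),
        ← pow_mul_pow_eq_pow_mod_mul_pow hxy, hx, zero_mul]
    rw [← pow_sub_mul_pow x hi, ← pow_sub_mul_pow y hj, mul_mul_mul_comm, hcorner, mul_zero]

theorem LinearIndependent.of_comp_of_ker_le {R M P Q ι : Type*} [CommRing R]
    [AddCommGroup M] [Module R M] [AddCommGroup P] [Module R P] [AddCommGroup Q] [Module R Q]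
    (g : M →ₗ[R] Q) (f : M →ₗ[R] P) (hgf : LinearMap.ker g ≤ LinearMap.ker f) {v : ι → M}
    (hv : LinearIndependent R (f ∘ v)) : LinearIndependent R (g ∘ v) := by
  rw [linearIndependent_iff] at hv ⊢
  intro l hl
  rw [← Finsupp.apply_linearCombination] at hl
  exact hv l (by rw [← Finsupp.apply_linearCombination]; exact hgf hl)

theorem MvPolynomial.span_range_X_pow_mul_X_pow (R : Type*) [CommSemiring R] :
    Submodule.span R
      (Set.range fun ij : ℕ × ℕ => (X 0 ^ ij.1 * X 1 ^ ij.2 : MvPolynomial (Fin 2) R)) = ⊤ := by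
  refine eq_top_iff.2 ((basisMonomials (Fin 2) R).span_eq.ge.trans (Submodule.span_mono ?_))
  rintro _ ⟨d, rfl⟩
  exact ⟨(d 0, d 1), by simp [monomial_fin_two]⟩

theorem Ideal.Quotient.span_range_mk_X_pow_mul_X_pow (R : Type*) [CommRing R]
    (I : Ideal (MvPolynomial (Fin 2) R)) :
    Submodule.span R (Set.range fun ij : ℕ × ℕ => Ideal.Quotient.mk I (X 0 ^ ij.1 * X 1 ^ ij.2))
      = ⊤ := by
  have h := congrArg (Submodule.map (Ideal.Quotient.mkₐ R I).toLinearMap)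
    (span_range_X_pow_mul_X_pow R)
  rwa [Submodule.map_span, ← Set.range_comp, Submodule.map_top,
    LinearMap.range_eq_top.2 (Ideal.Quotient.mkₐ_surjective R I)] at h

namespace XnYnQuotient

variable (R : Type*) [CommRing R] (n q : ℕ)

noncomputable abbrev ideal : Ideal (MvPolynomial (Fin 2) R) :=
  Ideal.span {X 0 ^ q, X 1 ^ q, X 0 ^ n - X 1 ^ n}

/-- `b = q % n`: the standard monomials are those divisible by none of `X^n`, `Y^q`, `X^b Y^(q-b)`,
the leading terms of a lex Gröbner basis of the ideal. -/
def IsStandardExp (ij : ℕ × ℕ) : Prop := ij.1 < n ∧ ij.2 < q ∧ ¬(q % n ≤ ij.1 ∧ q - q % n ≤ ij.2)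

instance : DecidablePred (IsStandardExp n q) := fun _ => inferInstanceAs (Decidable (_ ∧ _))

variable {R n q}

theorem isStandardExp_iff_of_lt {i j : ℕ} (hi : i < n) :
    IsStandardExp n q (i, j) ↔ ¬(q ≤ j ∨ (q % n ≤ i ∧ q - q % n ≤ j)) := by
  unfold IsStandardExp; omega

theorem span_standardMonomials (hn : 0 < n) :
    Submodule.span R (Set.range fun ij : {ij : ℕ × ℕ // IsStandardExp n q ij} =>
      Ideal.Quotient.mk (ideal R n q) (X 0 ^ ij.1.1 * X 1 ^ ij.1.2)) = ⊤ := by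
  set S := Submodule.span R (Set.range fun ij : {ij : ℕ × ℕ // IsStandardExp n q ij} =>
      Ideal.Quotient.mk (ideal R n q) (X 0 ^ ij.1.1 * X 1 ^ ij.1.2))
  have hx : Ideal.Quotient.mk (ideal R n q) (X 0) ^ q = 0 := by
    rw [← map_pow, Ideal.Quotient.eq_zero_iff_mem]; exact Ideal.subset_span (by simp)
  have hy : Ideal.Quotient.mk (ideal R n q) (X 1) ^ q = 0 := by
    rw [← map_pow, Ideal.Quotient.eq_zero_iff_mem]; exact Ideal.subset_span (by simp)
  have hxy : Ideal.Quotient.mk (ideal R n q) (X 0) ^ n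
      = Ideal.Quotient.mk (ideal R n q) (X 1) ^ n := by
    rw [← map_pow, ← map_pow, Ideal.Quotient.eq]; exact Ideal.subset_span (by simp)
  have hmem : ∀ i j, Ideal.Quotient.mk (ideal R n q) (X 0 ^ i * X 1 ^ j) ∈ S := by
    intro i j
    rw [map_mul, map_pow, map_pow, pow_mul_pow_eq_pow_mod_mul_pow hxy]
    by_cases hs : IsStandardExp n q (i % n, j + i / n * n)
    · exact Submodule.subset_span ⟨⟨_, hs⟩, by simp⟩
    · rw [isStandardExp_iff_of_lt (Nat.mod_lt i hn), not_not] at hs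
      rw [pow_mul_pow_eq_zero hx hy hxy hs]
      exact S.zero_mem
  rw [eq_top_iff, ← Ideal.Quotient.span_range_mk_X_pow_mul_X_pow R (ideal R n q), Submodule.span_le]
  rintro _ ⟨⟨i, j⟩, rfl⟩
  exact hmem i j

variable (R n q) in
noncomputable def normalForm (i j : ℕ) : (ℕ × ℕ) →₀ R :=
  if IsStandardExp n q (i % n, j + i / n * n) then Finsupp.single (i % n, j + i / n * n) 1 else 0

theorem normalForm_add_self_left (hn : 0 < n) (i j : ℕ) : normalForm R n q (i + q) j = 0 := by
  rw [normalForm, if_neg]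
  unfold IsStandardExp
  -- `(i + q) % n` is `i % n + b`, landing in the corner, or `i % n + b - n`, and then the
  -- `Y`-exponent reaches `q`.
  have hmod := Nat.add_mod_eq_ite (k := n) (m := i) (n := q)
  have := Nat.mod_add_div' (i + q) n
  have := Nat.mod_add_div' i n
  have := Nat.mod_add_div' q n
  have := Nat.mod_lt q hn
  split_ifs at hmod <;> omega

theorem normalForm_add_self_right (i j : ℕ) : normalForm R n q i (j + q) = 0 := by
  rw [normalForm, if_neg]
  unfold IsStandardExp
  omega

theorem normalForm_add_left (hn : 0 < n) (i j : ℕ) :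
    normalForm R n q (i + n) j = normalForm R n q i (j + n) := by
  have hdiv : j + (i + n) / n * n = j + n + i / n * n := by
    rw [Nat.add_div_right _ hn]; ring
  simp only [normalForm, Nat.add_mod_right, hdiv]

theorem normalForm_of_isStandardExp {i j : ℕ} (h : IsStandardExp n q (i, j)) :
    normalForm R n q i j = Finsupp.single (i, j) 1 := by
  have hi : i % n = i := Nat.mod_eq_of_lt h.1
  have hj : j + i / n * n = j := by rw [Nat.div_eq_of_lt h.1, zero_mul, add_zero]
  rw [normalForm, hi, hj, if_pos h]

variable (R n q) in
noncomputable def normalFormLin : MvPolynomial (Fin 2) R →ₗ[R] (ℕ × ℕ) →₀ R :=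
  (basisMonomials (Fin 2) R).constr R fun d => normalForm R n q (d 0) (d 1)

theorem normalFormLin_X_pow_mul_X_pow (i j : ℕ) :
    normalFormLin R n q (X 0 ^ i * X 1 ^ j) = normalForm R n q i j := by
  have hmon : (X 0 ^ i * X 1 ^ j : MvPolynomial (Fin 2) R)
      = basisMonomials (Fin 2) R (Finsupp.single 0 i + Finsupp.single 1 j) := by
    simp [monomial_fin_two]
  rw [hmon, normalFormLin, Module.Basis.constr_basis]
  simp

theorem normalFormLin_mul_eq_zero {g : MvPolynomial (Fin 2) R}
    (h : ∀ i j, normalFormLin R n q (X 0 ^ i * X 1 ^ j * g) = 0) (P : MvPolynomial (Fin 2) R) :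
    normalFormLin R n q (P * g) = 0 := by
  have : normalFormLin R n q ∘ₗ LinearMap.mulRight R g = 0 :=
    (basisMonomials (Fin 2) R).ext fun d => by simpa [monomial_fin_two] using h (d 0) (d 1)
  exact LinearMap.congr_fun this P

theorem normalFormLin_eq_zero_of_mem (hn : 0 < n) {f : MvPolynomial (Fin 2) R}
    (hf : f ∈ ideal R n q) : normalFormLin R n q f = 0 := by
  suffices ∀ P, normalFormLin R n q (P * f) = 0 by simpa using this 1
  induction hf using Submodule.span_induction with
  | mem g hg =>
    refine normalFormLin_mul_eq_zero fun i j => ?_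
    rcases hg with rfl | rfl | rfl
    · rw [mul_right_comm, ← pow_add, normalFormLin_X_pow_mul_X_pow, normalForm_add_self_left hn]
    · rw [mul_assoc, ← pow_add, normalFormLin_X_pow_mul_X_pow, normalForm_add_self_right]
    · rw [show (X 0 ^ i * X 1 ^ j * (X 0 ^ n - X 1 ^ n) : MvPolynomial (Fin 2) R)
          = X 0 ^ (i + n) * X 1 ^ j - X 0 ^ i * X 1 ^ (j + n) by ring, map_sub,
        normalFormLin_X_pow_mul_X_pow, normalFormLin_X_pow_mul_X_pow, normalForm_add_left hn,
        sub_self]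
  | zero => simp
  | add f g _ _ hf hg => intro P; rw [mul_add, map_add, hf, hg, add_zero]
  | smul a f _ hf => intro P; rw [smul_eq_mul, ← mul_assoc]; exact hf _

theorem linearIndependent_standardMonomials (hn : 0 < n) :
    LinearIndependent R fun ij : {ij : ℕ × ℕ // IsStandardExp n q ij} =>
      Ideal.Quotient.mk (ideal R n q) (X 0 ^ ij.1.1 * X 1 ^ ij.1.2) := by
  let v (ij : {ij : ℕ × ℕ // IsStandardExp n q ij}) : MvPolynomial (Fin 2) R :=
    X 0 ^ ij.1.1 * X 1 ^ ij.1.2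
  have hv : normalFormLin R n q ∘ v = fun ij => Finsupp.single ij.1 1 :=
    funext fun ij => (normalFormLin_X_pow_mul_X_pow _ _).trans (normalForm_of_isStandardExp ij.2)
  refine LinearIndependent.of_comp_of_ker_le (Ideal.Quotient.mkₐ R (ideal R n q)).toLinearMap
    (normalFormLin R n q) (fun f hf => ?_) (v := v) ?_
  · exact normalFormLin_eq_zero_of_mem hn (Ideal.Quotient.eq_zero_iff_mem.1 hf)
  · rw [hv]
    exact (Finsupp.linearIndependent_single_one R _).comp _ Subtype.val_injective

end XnYnQuotient

theorem stmt12_general {k : Type*} [Field k] (p : ℕ)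
    (n : ℕ) (hn : 1 < n) (e b : ℕ)
    (hb : p ^ e ≡ b [MOD n]) (hb2 : b ≤ n - 1) :
    LinearIndependent k
      (fun ij : {ij : ℕ × ℕ //
          ij.1 < n ∧ ij.2 < p ^ e ∧ ¬ (b ≤ ij.1 ∧ p ^ e - b ≤ ij.2)} =>
        Ideal.Quotient.mk
          (Ideal.span {(X 0 : MvPolynomial (Fin 2) k) ^ p ^ e, X 1 ^ p ^ e,
            X 0 ^ n - X 1 ^ n})
          (X 0 ^ ij.1.1 * X 1 ^ ij.1.2)) ∧
    Submodule.span k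
      (Set.range (fun ij : {ij : ℕ × ℕ //
          ij.1 < n ∧ ij.2 < p ^ e ∧ ¬ (b ≤ ij.1 ∧ p ^ e - b ≤ ij.2)} =>
        Ideal.Quotient.mk
          (Ideal.span {(X 0 : MvPolynomial (Fin 2) k) ^ p ^ e, X 1 ^ p ^ e,
            X 0 ^ n - X 1 ^ n})
          (X 0 ^ ij.1.1 * X 1 ^ ij.1.2))) = ⊤ := by
  have hn0 : 0 < n := by omega
  have hqb : p ^ e % n = b := by rw [hb, Nat.mod_eq_of_lt (by omega)]
  subst hqb
  exact ⟨XnYnQuotient.linearIndependent_standardMonomials hn0,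
    XnYnQuotient.span_standardMonomials hn0⟩

/-- The monomial basis of `k[X,Y]/(X^q, Y^q, X^n - Y^n)` (with `q = p^e > n`) given by
the Gröbner-basis argument: the images of the monomials `X^i·Y^j` with `i < n`, `j < q`,
and not both `b ≤ i` and `q - b ≤ j` are linearly independent and span the quotient. -/
theorem stmt12 {k : Type*} [Field k] (p : ℕ) (hp : p.Prime) [CharP k p]
    (n : ℕ) (hn : 1 < n) (hpn : ¬ p ∣ n) (e b : ℕ) (hq : n < p ^ e)
    (hb : p ^ e ≡ b [MOD n]) (hb1 : 1 ≤ b) (hb2 : b ≤ n - 1) :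
    LinearIndependent k
      (fun ij : {ij : ℕ × ℕ //
          ij.1 < n ∧ ij.2 < p ^ e ∧ ¬ (b ≤ ij.1 ∧ p ^ e - b ≤ ij.2)} =>
        Ideal.Quotient.mk
          (Ideal.span {(X 0 : MvPolynomial (Fin 2) k) ^ p ^ e, X 1 ^ p ^ e,
            X 0 ^ n - X 1 ^ n})
          (X 0 ^ ij.1.1 * X 1 ^ ij.1.2)) ∧
    Submodule.span k
      (Set.range (fun ij : {ij : ℕ × ℕ //
          ij.1 < n ∧ ij.2 < p ^ e ∧ ¬ (b ≤ ij.1 ∧ p ^ e - b ≤ ij.2)} =>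
        Ideal.Quotient.mk
          (Ideal.span {(X 0 : MvPolynomial (Fin 2) k) ^ p ^ e, X 1 ^ p ^ e,
            X 0 ^ n - X 1 ^ n})
          (X 0 ^ ij.1.1 * X 1 ^ ij.1.2))) = ⊤ :=
  stmt12_general p n hn e b hb hb2
end
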